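/- arXiv:1804.02306 — 7 statements merged into one kernel-verified Lean document; each statement's English description precedes it below -/
import Mathlib

section
/- Let S be an admissible additive subsemigroup of ℤ^n × ℤ. Then the Okounkov convex set Δ(S) equals the closure in ℝ^n of the union ⋃_{k≥1} S^k. -/
open Set

noncomputable section

/-- The embedding of the lattice `ℤ^n × ℤ` into `ℝ^n × ℝ`. -/
def latticeEmbed {n : ℕ} (x : (Fin n → ℤ) × ℤ) : (Fin n → ℝ) × ℝ :=
  (fun i => (x.1 i : ℝ), (x.2 : ℝ))

/-- The set of all finite nonnegative linear combinations of elements of `T`. -/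
def coneCombos {E : Type*} [AddCommMonoid E] [Module ℝ E] (T : Set E) : Set E :=
  {x | ∃ (k : ℕ) (c : Fin k → ℝ) (t : Fin k → E),
    (∀ i, 0 ≤ c i) ∧ (∀ i, t i ∈ T) ∧ x = ∑ i, c i • t i}

/-- `C(T)`: the closed convex cone generated by `T`. -/
def closedConeHull {E : Type*} [AddCommMonoid E] [Module ℝ E] [TopologicalSpace E]
    (T : Set E) : Set E :=
  closure (coneCombos T)

/-- The closed convex cone `C(S) ⊆ ℝ^{n+1}` generated by a subset `S ⊆ ℤ^n × ℤ`. -/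
def coneOf {n : ℕ} (S : Set ((Fin n → ℤ) × ℤ)) : Set ((Fin n → ℝ) × ℝ) :=
  closedConeHull (latticeEmbed '' S)

/-- The Okounkov convex set `Δ(S) = π(C(S) ∩ (ℝ^n × {1}))`. -/
def okounkovSet {n : ℕ} (S : Set ((Fin n → ℤ) × ℤ)) : Set (Fin n → ℝ) :=
  Prod.fst '' (coneOf S ∩ {x | x.2 = 1})

/-- `S^k = {α ∈ ℝ^n : kα ∈ ℤ^n and (kα, k) ∈ S}`. -/
def Spow {n : ℕ} (S : Set ((Fin n → ℤ) × ℤ)) (k : ℕ) : Set (Fin n → ℝ) :=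
  {α | ∃ β : Fin n → ℤ, (∀ i, (β i : ℝ) = (k : ℝ) * α i) ∧ (β, (k : ℤ)) ∈ S}

/-!
A point `α ∈ S^k` gives the point `(α, 1) = k⁻¹ • (kα, k)` of `C(S)`, and `Δ(S)` is closed.
Conversely, a nonnegative combination `∑ cᵢ sᵢ` of points of `S` is the limit of
`N⁻¹ • ∑ ⌈cᵢ N⌉ sᵢ`, where `∑ ⌈cᵢ N⌉ sᵢ` lies in `S ∪ {0}` because `S` is a semigroup. So `(α, 1)`
is a limit of such points `N⁻¹ • T` with positive last coordinate, and the map `(x, t) ↦ x / t`,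
continuous near `(α, 1)`, sends them to `T.1 / T.2 ∈ S^{T.2}`.
-/

open Filter Topology

theorem AddSubmonoid.eq_zero_or_mem_of_mem_closure {M : Type*} [AddMonoid M] {S : Set M}
    (hS : ∀ a ∈ S, ∀ b ∈ S, a + b ∈ S) {x : M} (hx : x ∈ closure S) : x = 0 ∨ x ∈ S := by
  induction hx using closure_induction with
  | mem x h => exact .inr h
  | zero => exact .inl rfl
  | add x y _ _ hx hy =>
    rcases hx with rfl | hx
    · simpa using hy
    rcases hy with rfl | hy
    · exact .inr ((add_zero x).symm ▸ hx)
    exact .inr (hS x hx y hy)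

section Cone

variable {E : Type*} [AddCommMonoid E] [Module ℝ E]

theorem smul_mem_coneCombos {T : Set E} {c : ℝ} (hc : 0 ≤ c) {t : E} (ht : t ∈ T) :
    c • t ∈ coneCombos T :=
  ⟨1, fun _ => c, fun _ => t, fun _ => hc, fun _ => ht, by simp⟩

variable [TopologicalSpace E] [ContinuousAdd E] [ContinuousSMul ℝ E]

theorem tendsto_inv_smul_sum_ceil_smul {ι : Type*} [Fintype ι] {c : ι → ℝ} (hc : ∀ i, 0 ≤ c i)
    (t : ι → E) :
    Tendsto (fun N : ℕ => (N : ℝ)⁻¹ • ∑ i, ⌈c i * N⌉₊ • t i) atTop (𝓝 (∑ i, c i • t i)) := by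
  have h (N : ℕ) :
      (N : ℝ)⁻¹ • ∑ i, ⌈c i * N⌉₊ • t i = ∑ i, ((⌈c i * N⌉₊ : ℝ) / N) • t i := by
    rw [Finset.smul_sum]
    refine Finset.sum_congr rfl fun i _ => ?_
    rw [div_eq_inv_mul, mul_smul, Nat.cast_smul_eq_nsmul]
  simp_rw [h]
  exact tendsto_finsetSum _ fun i _ =>
    ((tendsto_nat_ceil_mul_div_atTop (hc i)).comp tendsto_natCast_atTop_atTop).smul_const _

theorem coneCombos_image_subset_closure {M : Type*} [AddCommMonoid M] (φ : M →+ E) (S : Set M) :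
    coneCombos (φ '' S) ⊆
      closure {y | ∃ N : ℕ, ∃ T ∈ AddSubmonoid.closure S, y = (N : ℝ)⁻¹ • φ T} := by
  rintro _ ⟨k, c, t, hc, ht, rfl⟩
  choose s hs hst using ht
  refine mem_closure_of_tendsto (tendsto_inv_smul_sum_ceil_smul hc t) (.of_forall fun N => ?_)
  refine ⟨N, ∑ i, ⌈c i * N⌉₊ • s i, AddSubmonoid.sum_mem _ fun i _ =>
    AddSubmonoid.nsmul_mem _ (AddSubmonoid.subset_closure (hs i)) _, ?_⟩
  simp [map_sum, map_nsmul, hst]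

end Cone

section Lattice

variable {n : ℕ}

def latticeEmbedHom : ((Fin n → ℤ) × ℤ) →+ (Fin n → ℝ) × ℝ where
  toFun := latticeEmbed
  map_zero' := by ext <;> simp [latticeEmbed]
  map_add' _ _ := by ext <;> simp [latticeEmbed]

def dehomogenize (x : (Fin n → ℝ) × ℝ) : Fin n → ℝ := x.2⁻¹ • x.1

theorem continuousAt_dehomogenize {x : (Fin n → ℝ) × ℝ} (hx : x.2 ≠ 0) :
    ContinuousAt dehomogenize x :=
  (continuousAt_snd.inv₀ hx).smul continuousAt_fst

theorem dehomogenize_mk_one (α : Fin n → ℝ) : dehomogenize (α, 1) = α := by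
  simp [dehomogenize]

theorem dehomogenize_smul {r : ℝ} (hr : r ≠ 0) (x : (Fin n → ℝ) × ℝ) :
    dehomogenize (r • x) = dehomogenize x := by
  simp [dehomogenize, smul_smul, mul_comm, hr]

theorem dehomogenize_latticeEmbed_mem_Spow {S : Set ((Fin n → ℤ) × ℤ)} {T : (Fin n → ℤ) × ℤ}
    (hT : T ∈ S) (hT2 : 0 < T.2) : dehomogenize (latticeEmbed T) ∈ Spow S T.2.toNat := by
  have hk : ((T.2.toNat : ℕ) : ℝ) = T.2 := by exact_mod_cast Int.toNat_of_nonneg hT2.le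
  refine ⟨T.1, fun i => ?_, by simpa [Int.toNat_of_nonneg hT2.le] using hT⟩
  have : (T.2 : ℝ) ≠ 0 := by positivity
  simp [dehomogenize, latticeEmbed, hk, this]

theorem dehomogenize_inv_smul_mem_iUnion_Spow {S : Set ((Fin n → ℤ) × ℤ)}
    (hS : ∀ a ∈ S, ∀ b ∈ S, a + b ∈ S) {N : ℕ} {T : (Fin n → ℤ) × ℤ}
    (hT : T ∈ AddSubmonoid.closure S) (hpos : 0 < ((N : ℝ)⁻¹ • latticeEmbed T).2) :
    dehomogenize ((N : ℝ)⁻¹ • latticeEmbed T) ∈ ⋃ k : ℕ, ⋃ (_ : 1 ≤ k), Spow S k := by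
  have hN : (N : ℝ) ≠ 0 := by rintro h; simp [h] at hpos
  have hT2 : 0 < T.2 := by
    have : (0 : ℝ) < T.2 :=
      pos_of_mul_pos_right (by simpa [latticeEmbed] using hpos) (by positivity)
    exact_mod_cast this
  have hTS : T ∈ S :=
    (AddSubmonoid.eq_zero_or_mem_of_mem_closure hS hT).resolve_left (by rintro rfl; simp at hT2)
  rw [dehomogenize_smul (inv_ne_zero hN)]
  exact mem_iUnion₂.2 ⟨_, by omega, dehomogenize_latticeEmbed_mem_Spow hTS hT2⟩

theorem mem_okounkovSet_iff {S : Set ((Fin n → ℤ) × ℤ)} {α : Fin n → ℝ} :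
    α ∈ okounkovSet S ↔ (α, 1) ∈ coneOf S := by
  constructor
  · rintro ⟨⟨_, _⟩, ⟨h, rfl⟩, rfl⟩
    exact h
  · exact fun h => ⟨(α, 1), ⟨h, rfl⟩, rfl⟩

theorem isClosed_okounkovSet (S : Set ((Fin n → ℤ) × ℤ)) : IsClosed (okounkovSet S) := by
  have : okounkovSet S = (fun α => (α, (1 : ℝ))) ⁻¹' coneOf S :=
    ext fun _ => mem_okounkovSet_iff
  rw [this]
  exact isClosed_closure.preimage (continuous_id.prodMk continuous_const)

theorem Spow_subset_okounkovSet {S : Set ((Fin n → ℤ) × ℤ)} {k : ℕ} (hk : 1 ≤ k) :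
    Spow S k ⊆ okounkovSet S := by
  rintro α ⟨β, hβ, hβS⟩
  have hk0 : (k : ℝ) ≠ 0 := by positivity
  have : (k : ℝ)⁻¹ • latticeEmbed (β, k) = (α, 1) := by
    ext i <;> simp [latticeEmbed, hβ, hk0]
  exact mem_okounkovSet_iff.2 <| subset_closure <|
    this ▸ smul_mem_coneCombos (by positivity) (mem_image_of_mem _ hβS)

end Lattice

theorem okounkovSet_eq_closure_iUnion_Spow_general (n : ℕ)
    (S : Set ((Fin n → ℤ) × ℤ))
    (hsemi : ∀ a ∈ S, ∀ b ∈ S, a + b ∈ S) :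
    okounkovSet S = closure (⋃ k : ℕ, ⋃ (_ : 1 ≤ k), Spow S k) := by
  refine Subset.antisymm (fun α hα => ?_) <| closure_minimal
    (iUnion₂_subset fun _ hk => Spow_subset_okounkovSet hk) (isClosed_okounkovSet S)
  have hcone : (α, (1 : ℝ)) ∈
      closure {y | ∃ N : ℕ, ∃ T ∈ AddSubmonoid.closure S, y = (N : ℝ)⁻¹ • latticeEmbedHom T} :=
    closure_minimal (coneCombos_image_subset_closure latticeEmbedHom S) isClosed_closure
      (mem_okounkovSet_iff.1 hα)
  have hcone_pos := (isOpen_lt continuous_const continuous_snd).inter_closure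
    ⟨zero_lt_one (α := ℝ), hcone⟩
  have hlim := mem_closure_image (continuousAt_dehomogenize one_ne_zero) hcone_pos
  rw [dehomogenize_mk_one] at hlim
  refine closure_mono ?_ hlim
  rintro _ ⟨_, ⟨hy, N, T, hT, rfl⟩, rfl⟩
  exact dehomogenize_inv_smul_mem_iUnion_Spow hsemi hT hy

/-- For an admissible additive subsemigroup `S ⊆ ℤ^n × ℤ`, the Okounkov
convex set `Δ(S)` equals the closure of `⋃_{k ≥ 1} S^k`. -/
theorem okounkovSet_eq_closure_iUnion_Spow (n : ℕ) (hn : 1 ≤ n)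
    (S : Set ((Fin n → ℤ) × ℤ))
    (hsemi : ∀ a ∈ S, ∀ b ∈ S, a + b ∈ S)
    (hadm : ∀ a ∈ S, 0 ≤ a.2) :
    okounkovSet S = closure (⋃ k : ℕ, ⋃ (_ : 1 ≤ k), Spow S k) :=
  okounkovSet_eq_closure_iUnion_Spow_general n S hsemi
end
end

section
/- Let S be an admissible additive subsemigroup of ℤ^n × ℤ. If K is a compact subset of the interior of Δ(S), then there exists k₀ ≥ 1 such that K ⊆ Conv(S^{k!}) for every integer k ≥ k₀. -/
open Set

noncomputable section

/-- `Conv(S^k)`: the closed convex hull of `S^k` in `ℝ^n`. -/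
def convSpow {n : ℕ} (S : Set ((Fin n → ℤ) × ℤ)) (k : ℕ) : Set (Fin n → ℝ) :=
  closure (convexHull ℝ (Spow S k))

/-!
A point of the interior of `Δ(S)` sits at height one in the interior of the closed cone `C(S)`,
and in finite dimension the interior of the closure of a convex set lies in the set itself; so the
point is a genuine finite combination `∑ cᵢ sᵢ` with `sᵢ ∈ S` and `∑ cᵢ mᵢ = 1`, `mᵢ` the heights.
Once `k ≥ mᵢ` for all `i`, each `mᵢ > 0` divides `k!`, so `sᵢ / mᵢ` is a point of `S^{k!}`, while
each `sᵢ` of height `0` is a recession direction of `Conv(S^{k!})`, because `α + (j / k!) sᵢ` lies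
in `S^{k!}` for `α ∈ S^{k!}` and `j ∈ ℕ`. Hence the point lies in `Conv(S^{k!})`
for all large `k`. By compactness `K` is covered by the interior of a polytope with finitely many
such vertices.
-/

open Filter Topology

section ConvexGeometry

variable {E : Type*}

theorem coneCombos_smul_mem [AddCommMonoid E] [Module ℝ E] {T : Set E} {r : ℝ} (hr : 0 ≤ r)
    {x : E} (hx : x ∈ coneCombos T) : r • x ∈ coneCombos T := by
  obtain ⟨k, c, t, hc, ht, rfl⟩ := hx
  exact ⟨k, fun i => r * c i, t, fun i => mul_nonneg hr (hc i), ht, by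
    simp only [Finset.smul_sum, mul_smul]⟩

theorem coneCombos_add_mem [AddCommMonoid E] [Module ℝ E] {T : Set E} {x y : E}
    (hx : x ∈ coneCombos T) (hy : y ∈ coneCombos T) : x + y ∈ coneCombos T := by
  obtain ⟨k₁, c₁, t₁, hc₁, ht₁, rfl⟩ := hx
  obtain ⟨k₂, c₂, t₂, hc₂, ht₂, rfl⟩ := hy
  refine ⟨k₁ + k₂, Fin.append c₁ c₂, Fin.append t₁ t₂, Fin.addCases (by simp [hc₁])
    (by simp [hc₂]), Fin.addCases (by simp [ht₁]) (by simp [ht₂]), ?_⟩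
  simp [Fin.sum_univ_add]

theorem convex_coneCombos [AddCommMonoid E] [Module ℝ E] (T : Set E) :
    Convex ℝ (coneCombos T) := fun _ hx _ hy _ _ ha hb _ =>
  coneCombos_add_mem (coneCombos_smul_mem ha hx) (coneCombos_smul_mem hb hy)

theorem Convex.interior_closure_subset [NormedAddCommGroup E] [NormedSpace ℝ E]
    [FiniteDimensional ℝ E] {s : Set E} (hs : Convex ℝ s) : interior (closure s) ⊆ s := by
  intro x hx
  have hspan : affineSpan ℝ (closure s) ≤ affineSpan ℝ s :=
    affineSpan_le.mpr (closure_minimal (subset_affineSpan ℝ s)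
      (affineSpan ℝ s).closed_of_finiteDimensional)
  have hint : (interior s).Nonempty := by
    rw [hs.interior_nonempty_iff_affineSpan_eq_top, ← top_le_iff,
      ← hs.closure.interior_nonempty_iff_affineSpan_eq_top.mp ⟨x, hx⟩]
    exact hspan
  rw [hs.interior_closure_eq_interior_of_nonempty_interior hint] at hx
  exact interior_subset hx

theorem IsCompact.exists_finset_subset_interior_convexHull [NormedAddCommGroup E]
    [NormedSpace ℝ E] [FiniteDimensional ℝ E] {K U : Set E} (hK : IsCompact K)
    (hKU : K ⊆ interior U) : ∃ u : Finset E, ↑u ⊆ U ∧ K ⊆ interior (convexHull ℝ ↑u) := by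
  classical
  have hsimplex (x : E) (hx : x ∈ K) := exists_mem_interior_convexHull_affineBasis
    (mem_interior_iff_mem_nhds.mp (hKU hx))
  choose b hxb hbU using hsimplex
  obtain ⟨t, hcover⟩ := hK.elim_nhds_subcover' (fun x hx => interior (convexHull ℝ (range (b x hx))))
    fun x hx => isOpen_interior.mem_nhds (hxb x hx)
  refine ⟨t.biUnion fun x => Finset.univ.image (b x x.2), ?_, hcover.trans ?_⟩
  · intro y hy
    simp only [Finset.coe_biUnion, Finset.coe_image, Finset.coe_univ, image_univ,
      mem_iUnion] at hy
    obtain ⟨x, -, hy⟩ := hy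
    exact hbU x x.2 (subset_convexHull ℝ _ hy)
  · refine iUnion₂_subset fun x hx => interior_mono (convexHull_mono ?_)
    intro y hy
    simp only [Finset.coe_biUnion, Finset.coe_image, Finset.coe_univ, image_univ, mem_iUnion]
    exact ⟨x, hx, hy⟩

theorem add_sum_smul_mem_of_forall_add_smul_mem [AddCommMonoid E] [Module ℝ E] {ι : Type*}
    {D : Set E} {F : Finset ι} {c : ι → ℝ} {v : ι → E}
    (hv : ∀ i ∈ F, ∀ t : ℝ, 0 ≤ t → ∀ p ∈ D, p + t • v i ∈ D) (hc : ∀ i ∈ F, 0 ≤ c i)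
    {p : E} (hp : p ∈ D) : p + ∑ i ∈ F, c i • v i ∈ D := by
  classical
  induction F using Finset.induction_on with
  | empty => simpa using hp
  | insert a F ha ih =>
    have := hv a (F.mem_insert_self a) _ (hc a (F.mem_insert_self a)) _
      (ih (fun i hi => hv i (Finset.mem_insert_of_mem hi))
        fun i hi => hc i (Finset.mem_insert_of_mem hi))
    rw [Finset.sum_insert ha]
    convert this using 1
    abel

/-- Read `D` as the height-one slice of a cone and `v i` as generators of heights `h i`. -/
theorem Convex.sum_smul_mem_of_sum_mul_eq_one [AddCommGroup E] [Module ℝ E] {ι : Type*}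
    {D : Set E} (hD : Convex ℝ D) {F : Finset ι} {c h : ι → ℝ} {v : ι → E}
    (hc : ∀ i ∈ F, 0 ≤ c i) (hh : ∀ i ∈ F, 0 ≤ h i) (hsum : ∑ i ∈ F, c i * h i = 1)
    (hpos : ∀ i ∈ F, 0 < h i → (h i)⁻¹ • v i ∈ D)
    (hzero : ∀ i ∈ F, h i = 0 → ∀ t : ℝ, 0 ≤ t → ∀ p ∈ D, p + t • v i ∈ D) :
    ∑ i ∈ F, c i • v i ∈ D := by
  classical
  rw [← Finset.sum_filter_add_sum_filter_not F (fun i => 0 < h i)]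
  refine add_sum_smul_mem_of_forall_add_smul_mem (fun i hi => ?_)
    (fun i hi => hc i (Finset.mem_filter.mp hi).1) ?_
  · obtain ⟨hiF, hi⟩ := Finset.mem_filter.mp hi
    exact hzero i hiF (le_antisymm (not_lt.mp hi) (hh i hiF))
  have hrescale : ∀ i ∈ F.filter (fun i => 0 < h i),
      c i • v i = (c i * h i) • ((h i)⁻¹ • v i) := fun i hi => by
    rw [smul_smul, mul_assoc, mul_inv_cancel₀ (Finset.mem_filter.mp hi).2.ne', mul_one]
  rw [Finset.sum_congr rfl hrescale]
  refine hD.sum_mem (fun i hi => ?_) ?_ (fun i hi => hpos i (Finset.mem_filter.mp hi).1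
    (Finset.mem_filter.mp hi).2)
  · exact mul_nonneg (hc i (Finset.mem_filter.mp hi).1) (hh i (Finset.mem_filter.mp hi).1)
  · rw [← hsum]
    refine Finset.sum_filter_of_ne fun i hi hne => ?_
    exact lt_of_le_of_ne (hh i hi) (Ne.symm (right_ne_zero_of_mul hne))

end ConvexGeometry

theorem add_nsmul_mem_of_add_mem {M : Type*} [AddMonoid M] {S : Set M}
    (hS : ∀ a ∈ S, ∀ b ∈ S, a + b ∈ S) {a b : M} (ha : a ∈ S) (hb : b ∈ S) (j : ℕ) :
    a + j • b ∈ S := by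
  induction j with
  | zero => simpa using ha
  | succ j ih => simpa [succ_nsmul, add_assoc] using hS _ ih _ hb

theorem succ_nsmul_mem_of_add_mem {M : Type*} [AddMonoid M] {S : Set M}
    (hS : ∀ a ∈ S, ∀ b ∈ S, a + b ∈ S) {a : M} (ha : a ∈ S) (j : ℕ) : (j + 1) • a ∈ S := by
  simpa [succ_nsmul'] using add_nsmul_mem_of_add_mem hS ha ha j

section Okounkov

variable {n : ℕ} {S : Set ((Fin n → ℤ) × ℤ)}

theorem coneOf_smul_mem {r : ℝ} (hr : 0 ≤ r) {x : (Fin n → ℝ) × ℝ} (hx : x ∈ coneOf S) :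
    r • x ∈ coneOf S :=
  map_mem_closure (continuous_const_smul r) hx fun _ hy => coneCombos_smul_mem hr hy

theorem mk_one_mem_interior_coneOf {x : Fin n → ℝ} (hx : x ∈ interior (okounkovSet S)) :
    (x, (1 : ℝ)) ∈ interior (coneOf S) := by
  rw [mem_interior_iff_mem_nhds]
  have hcont : ContinuousAt (fun p : (Fin n → ℝ) × ℝ => p.2⁻¹ • p.1) (x, 1) :=
    (continuousAt_snd.inv₀ one_ne_zero).smul continuousAt_fst
  have hslice : ∀ᶠ p : (Fin n → ℝ) × ℝ in 𝓝 (x, 1), p.2⁻¹ • p.1 ∈ okounkovSet S :=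
    hcont.eventually_mem (by simpa using isOpen_interior.mem_nhds hx) |>.mono
      fun _ hp => interior_subset hp
  have hheight : ∀ᶠ p : (Fin n → ℝ) × ℝ in 𝓝 (x, 1), 0 < p.2 :=
    continuousAt_const.eventually_lt continuousAt_snd one_pos
  filter_upwards [hslice, hheight] with p ⟨q, ⟨hq, hq1⟩, hqp⟩ hp
  have hpq : p = p.2 • q := by
    ext
    · simp [hqp, ← mul_assoc, mul_inv_cancel₀ hp.ne']
    · simp [show q.2 = 1 from hq1]
  rw [hpq]
  exact coneOf_smul_mem hp.le hq

def coneSlice (S : Set ((Fin n → ℤ) × ℤ)) : Set (Fin n → ℝ) :=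
  {y | (y, (1 : ℝ)) ∈ coneCombos (latticeEmbed '' S)}

theorem convex_coneSlice : Convex ℝ (coneSlice S) := by
  intro x hx y hy a b ha hb hab
  have := convex_coneCombos _ hx hy ha hb hab
  simpa [coneSlice, hab] using this

theorem interior_okounkovSet_subset_coneSlice : interior (okounkovSet S) ⊆ coneSlice S :=
  fun _ hx => (convex_coneCombos _).interior_closure_subset (mk_one_mem_interior_coneOf hx)

variable (hsemi : ∀ a ∈ S, ∀ b ∈ S, a + b ∈ S)
include hsemi

theorem inv_smul_mem_Spow {s : (Fin n → ℤ) × ℤ} (hs : s ∈ S) (hpos : 0 < s.2) {N : ℕ}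
    (hN : N ≠ 0) (hdvd : s.2 ∣ N) : (s.2 : ℝ)⁻¹ • (latticeEmbed s).1 ∈ Spow S N := by
  obtain ⟨j, hj⟩ := hdvd
  have hj0 : 0 < j := pos_of_mul_pos_right (hj ▸ by positivity) hpos.le
  lift j to ℕ using hj0.le
  obtain ⟨j, rfl⟩ := Nat.exists_eq_add_one_of_ne_zero (by omega : j ≠ 0)
  have hjR : (N : ℝ) = s.2 * (j + 1) := by exact_mod_cast hj
  refine ⟨((j + 1) • s).1, fun i => ?_, ?_⟩
  · simp [latticeEmbed, hjR, field]
  · convert succ_nsmul_mem_of_add_mem hsemi hs j using 1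
    ext <;> simp [hj, mul_comm]

theorem add_div_smul_mem_Spow {N : ℕ} (hN : N ≠ 0) {α : Fin n → ℝ} (hα : α ∈ Spow S N)
    {s : (Fin n → ℤ) × ℤ} (hs : s ∈ S) (hs0 : s.2 = 0) (j : ℕ) :
    α + ((j : ℝ) / N) • (latticeEmbed s).1 ∈ Spow S N := by
  obtain ⟨β, hβ, hβS⟩ := hα
  refine ⟨β + j • s.1, fun i => ?_, ?_⟩
  · simp [latticeEmbed, hβ, field]
  · convert add_nsmul_mem_of_add_mem hsemi hβS hs j using 1
    ext <;> simp [hs0]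

theorem add_smul_mem_convexHull_Spow {N : ℕ} (hN : N ≠ 0) {s : (Fin n → ℤ) × ℤ} (hs : s ∈ S)
    (hs0 : s.2 = 0) {t : ℝ} (ht : 0 ≤ t) {p : Fin n → ℝ} (hp : p ∈ convexHull ℝ (Spow S N)) :
    p + t • (latticeEmbed s).1 ∈ convexHull ℝ (Spow S N) := by
  set v := (latticeEmbed s).1
  refine convexHull_min (fun α hα => ?_) ((convex_convexHull ℝ _).translate_preimage_left _) hp
  obtain ⟨j, hj⟩ := exists_nat_ge (t * N)
  have hN' : (0 : ℝ) < N := by positivity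
  have hj' : (0 : ℝ) < j + 1 := by positivity
  have hend := add_div_smul_mem_Spow hsemi hN hα hs hs0 (j + 1)
  have hseg : α + t • v ∈ segment ℝ α (α + (((j + 1 : ℕ) : ℝ) / N) • v) := by
    rw [segment_eq_image']
    refine ⟨t * N / (j + 1), ⟨by positivity, (div_le_one hj').mpr (by linarith)⟩, ?_⟩
    simp only [add_sub_cancel_left, smul_smul]
    push_cast
    field_simp
  exact (convex_convexHull ℝ _).segment_subset (subset_convexHull ℝ _ hα)
    (subset_convexHull ℝ _ hend) hseg

theorem eventually_mem_convexHull_Spow_factorial (hadm : ∀ a ∈ S, 0 ≤ a.2) {y : Fin n → ℝ}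
    (hy : y ∈ coneSlice S) : ∀ᶠ k : ℕ in atTop, y ∈ convexHull ℝ (Spow S k.factorial) := by
  obtain ⟨r, c, t, hc, ht, hyt⟩ := hy
  choose s hsS hst using ht
  obtain rfl : t = fun i => latticeEmbed (s i) := funext fun i => (hst i).symm
  have hy : y = ∑ i, c i • (latticeEmbed (s i)).1 := by
    simpa [Prod.fst_sum] using congrArg Prod.fst hyt
  have hheight : ∑ i, c i * ((s i).2 : ℝ) = 1 := by
    simpa [Prod.snd_sum, latticeEmbed] using (congrArg Prod.snd hyt).symm
  filter_upwards [eventually_ge_atTop (Finset.univ.sup fun i => (s i).2.toNat)] with k hk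
  have hN : k.factorial ≠ 0 := k.factorial_ne_zero
  rw [hy]
  refine (convex_convexHull ℝ _).sum_smul_mem_of_sum_mul_eq_one (fun i _ => hc i)
    (fun i _ => by exact_mod_cast hadm _ (hsS i)) hheight (fun i _ hi => ?_)
    (fun i _ hi _ ht _ hp => ?_)
  · have hpos : 0 < (s i).2 := by exact_mod_cast hi
    have hle : (s i).2.toNat ≤ k := (Finset.le_sup (Finset.mem_univ i)).trans hk
    have hdvd : (s i).2 ∣ (k.factorial : ℤ) := by
      rw [← Int.toNat_of_nonneg hpos.le]
      exact Int.natCast_dvd_natCast.mpr (Nat.dvd_factorial (by omega) hle)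
    exact subset_convexHull ℝ _ (inv_smul_mem_Spow hsemi (hsS i) hpos hN hdvd)
  · exact add_smul_mem_convexHull_Spow hsemi hN (hsS i) (by exact_mod_cast hi) ht hp

end Okounkov

theorem compact_subset_convexHull_Spow_factorial_general (n : ℕ)
    (S : Set ((Fin n → ℤ) × ℤ))
    (hsemi : ∀ a ∈ S, ∀ b ∈ S, a + b ∈ S)
    (hadm : ∀ a ∈ S, 0 ≤ a.2)
    (K : Set (Fin n → ℝ)) (hK : IsCompact K)
    (hKsub : K ⊆ interior (okounkovSet S)) :
    ∃ k₀ : ℕ, 1 ≤ k₀ ∧ ∀ k : ℕ, k₀ ≤ k → K ⊆ convSpow S (Nat.factorial k) := by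
  have hKslice : K ⊆ interior (coneSlice S) :=
    hKsub.trans (interior_maximal interior_okounkovSet_subset_coneSlice isOpen_interior)
  obtain ⟨u, hu, hKu⟩ := hK.exists_finset_subset_interior_convexHull hKslice
  have hvertices : ∀ᶠ k : ℕ in atTop, ∀ x ∈ u, x ∈ convexHull ℝ (Spow S k.factorial) :=
    (eventually_all_finset u).mpr fun x hx =>
      eventually_mem_convexHull_Spow_factorial hsemi hadm (hu hx)
  obtain ⟨k₀, hk₀⟩ := eventually_atTop.mp hvertices
  refine ⟨max 1 k₀, le_max_left _ _, fun k hk => ?_⟩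
  calc K ⊆ interior (convexHull ℝ ↑u) := hKu
    _ ⊆ convexHull ℝ ↑u := interior_subset
    _ ⊆ convexHull ℝ (Spow S k.factorial) :=
      convexHull_min (hk₀ k (le_of_max_le_right hk)) (convex_convexHull ℝ _)
    _ ⊆ convSpow S k.factorial := subset_closure

/-- For an admissible additive subsemigroup `S ⊆ ℤ^n × ℤ` and a compact
subset `K` of the interior of `Δ(S)`, there exists `k₀ ≥ 1` such that `K ⊆ Conv(S^{k!})`
for every `k ≥ k₀`. -/
theorem compact_subset_convexHull_Spow_factorial (n : ℕ) (hn : 1 ≤ n)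
    (S : Set ((Fin n → ℤ) × ℤ))
    (hsemi : ∀ a ∈ S, ∀ b ∈ S, a + b ∈ S)
    (hadm : ∀ a ∈ S, 0 ≤ a.2)
    (K : Set (Fin n → ℝ)) (hK : IsCompact K)
    (hKsub : K ⊆ interior (okounkovSet S)) :
    ∃ k₀ : ℕ, 1 ≤ k₀ ∧ ∀ k : ℕ, k₀ ≤ k → K ⊆ convSpow S (Nat.factorial k) :=
  compact_subset_convexHull_Spow_factorial_general n S hsemi hadm K hK hKsub
end
end

section
/- Let S be an admissible additive subsemigroup of ℤ^n × ℤ containing at least one element (α, k) with k ≥ 1. Then Δ(S) is compact if and only if S is strongly admissible, i.e. if and only if C(S) ∩ (ℝ^n × {0}) = {(0,0)}. -/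
/-!
A nonzero point of `C(S)` at height `0` is a recession direction of the slice `C(S) ∩ {x₂ = 1}`,
which is nonempty because `S` has a point of positive height; so a bounded slice forces such points
to vanish. Conversely, if `C(S)` meets height `0` only at the origin, the height `|x₂|` is bounded
below by some `c > 0` on the compact set of unit vectors of `C(S)`, so every point of the slice has
norm at most `1 / c`; a closed bounded slice is compact, and so is its projection `Δ(S)`.
-/

open Set

noncomputable section

lemma coneCombos_eq_hull {E : Type*} [AddCommMonoid E] [Module ℝ E] (T : Set E) :
    coneCombos T = PointedCone.hull ℝ T := by
  ext x
  simp only [coneCombos, SetLike.mem_coe, Submodule.mem_span_set']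
  constructor
  · rintro ⟨k, c, t, hc, ht, rfl⟩
    exact ⟨k, fun i => ⟨c i, hc i⟩, fun i => ⟨t i, ht i⟩, rfl⟩
  · rintro ⟨k, c, t, rfl⟩
    exact ⟨k, fun i => c i, fun i => t i, fun i => (c i).2, fun i => (t i).2, rfl⟩

lemma coneOf_eq_closure_hull {n : ℕ} (S : Set ((Fin n → ℤ) × ℤ)) :
    coneOf S = (PointedCone.hull ℝ (latticeEmbed '' S)).closure := by
  rw [coneOf, closedConeHull, coneCombos_eq_hull, PointedCone.coe_closure]

section Slice

variable {E : Type*} [NormedAddCommGroup E] [NormedSpace ℝ E]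

lemma eq_zero_of_isBounded_of_smul_add_mem {s : Set E} (hs : Bornology.IsBounded s) {v w : E}
    (h : ∀ t : ℝ, 0 ≤ t → t • v + w ∈ s) : v = 0 := by
  obtain ⟨R, hR⟩ := hs.exists_norm_le
  by_contra hv
  have hv_pos : 0 < ‖v‖ := norm_pos_iff.2 hv
  set t := (|R| + ‖w‖ + 1) / ‖v‖
  have ht : 0 ≤ t := by positivity
  have : |R| + ‖w‖ + 1 ≤ R + ‖w‖ :=
    calc |R| + ‖w‖ + 1 = ‖t • v‖ := by
          rw [norm_smul, Real.norm_of_nonneg ht, div_mul_cancel₀ _ hv_pos.ne']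
      _ ≤ ‖t • v + w‖ + ‖w‖ := norm_le_add_norm_add _ _
      _ ≤ R + ‖w‖ := by gcongr; exact hR _ (h t ht)
  linarith [le_abs_self R]

namespace PointedCone

variable (K : PointedCone ℝ (E × ℝ))

lemma eq_zero_of_isBounded_fst_inter_snd_eq_one {w : E × ℝ} (hwK : w ∈ K) (hw : w.2 = 1)
    (hb : Bornology.IsBounded (Prod.fst '' ((K : Set (E × ℝ)) ∩ {x | x.2 = 1})))
    {x : E × ℝ} (hxK : x ∈ K) (hx : x.2 = 0) : x = 0 := by
  have hx₁ : x.1 = 0 := eq_zero_of_isBounded_of_smul_add_mem hb fun t ht =>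
    ⟨t • x + w, ⟨K.add_mem (K.smul_mem ht hxK) hwK, by simp [hx, hw]⟩, rfl⟩
  exact Prod.ext hx₁ hx

lemma isBounded_inter_snd_eq_one [ProperSpace E] (hK : IsClosed (K : Set (E × ℝ)))
    (h : ∀ x ∈ K, x.2 = 0 → x = 0) :
    Bornology.IsBounded ((K : Set (E × ℝ)) ∩ {x | x.2 = 1}) := by
  obtain ⟨c, hc, hc_le⟩ : ∃ c, 0 < c ∧ ∀ x ∈ (K : Set (E × ℝ)) ∩ Metric.sphere 0 1, c ≤ |x.2| :=
    ((isCompact_sphere 0 1).inter_left hK).exists_forall_le' continuous_snd.abs.continuousOn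
      fun x ⟨hxK, hx⟩ => abs_pos.2 fun h0 => by simp [h x hxK h0] at hx
  refine (Metric.isBounded_closedBall (x := 0) (r := c⁻¹)).subset ?_
  rintro x ⟨hxK, hx : x.2 = 1⟩
  have hx₀ : x ≠ 0 := by rintro rfl; simp at hx
  have hcx := hc_le (‖x‖⁻¹ • x) ⟨K.smul_mem (by positivity) hxK, by simp [norm_smul, hx₀]⟩
  simp only [Prod.smul_snd, hx, smul_eq_mul, mul_one, abs_inv, abs_norm] at hcx
  rw [mem_closedBall_zero_iff]
  exact (le_inv_comm₀ hc (norm_pos_iff.2 hx₀)).1 hcx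

theorem isCompact_fst_inter_snd_eq_one_iff [ProperSpace E] (hK : IsClosed (K : Set (E × ℝ)))
    {w : E × ℝ} (hwK : w ∈ K) (hw : w.2 = 1) :
    IsCompact (Prod.fst '' ((K : Set (E × ℝ)) ∩ {x | x.2 = 1})) ↔
      (K : Set (E × ℝ)) ∩ {x | x.2 = 0} = {0} := by
  refine ⟨fun hc => ?_, fun h => ?_⟩
  · refine eq_singleton_iff_unique_mem.2 ⟨⟨K.zero_mem, rfl⟩, ?_⟩
    rintro x ⟨hxK, hx⟩
    exact K.eq_zero_of_isBounded_fst_inter_snd_eq_one hwK hw hc.isBounded hxK hx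
  · have h₀ : ∀ x ∈ K, x.2 = 0 → x = 0 := fun x hxK hx => h.subset ⟨hxK, hx⟩
    have hslice : IsCompact ((K : Set (E × ℝ)) ∩ {x | x.2 = 1}) :=
      Metric.isCompact_of_isClosed_isBounded
        (hK.inter (isClosed_eq continuous_snd continuous_const))
        (K.isBounded_inter_snd_eq_one hK h₀)
    exact hslice.image continuous_fst

end PointedCone

end Slice

lemma exists_mem_coneOf_snd_eq_one {n : ℕ} {S : Set ((Fin n → ℤ) × ℤ)}
    (hpos : ∃ a ∈ S, 1 ≤ a.2) : ∃ w ∈ coneOf S, w.2 = 1 := by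
  obtain ⟨a, haS, ha⟩ := hpos
  have ha_pos : (0 : ℝ) < a.2 := by exact_mod_cast ha
  refine ⟨(a.2 : ℝ)⁻¹ • latticeEmbed a, ?_, by simp [latticeEmbed, ha_pos.ne']⟩
  rw [coneOf_eq_closure_hull]
  exact subset_closure <|
    (PointedCone.hull ℝ _).smul_mem (inv_nonneg.2 ha_pos.le) (PointedCone.subset_hull ⟨a, haS, rfl⟩)

theorem isCompact_okounkovSet_iff_stronglyAdmissible_general (n : ℕ)
    (S : Set ((Fin n → ℤ) × ℤ))
    (hpos : ∃ a ∈ S, 1 ≤ a.2) :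
    IsCompact (okounkovSet S) ↔ coneOf S ∩ {x | x.2 = 0} = {0} := by
  obtain ⟨w, hwK, hw⟩ := exists_mem_coneOf_snd_eq_one hpos
  rw [coneOf_eq_closure_hull] at hwK
  rw [okounkovSet, coneOf_eq_closure_hull]
  exact PointedCone.isCompact_fst_inter_snd_eq_one_iff _ isClosed_closure hwK hw

/-- For an admissible additive subsemigroup `S ⊆ ℤ^n × ℤ` containing
an element `(α, k)` with `k ≥ 1`, the Okounkov convex set `Δ(S)` is compact if and only
if `S` is strongly admissible, i.e. `C(S) ∩ (ℝ^n × {0}) = {(0,0)}`. -/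
theorem isCompact_okounkovSet_iff_stronglyAdmissible (n : ℕ) (hn : 1 ≤ n)
    (S : Set ((Fin n → ℤ) × ℤ))
    (hsemi : ∀ a ∈ S, ∀ b ∈ S, a + b ∈ S)
    (hadm : ∀ a ∈ S, 0 ≤ a.2)
    (hpos : ∃ a ∈ S, 1 ≤ a.2) :
    IsCompact (okounkovSet S) ↔ coneOf S ∩ {x | x.2 = 0} = {0} :=
  isCompact_okounkovSet_iff_stronglyAdmissible_general n S hpos
end
end

section
/- Let S be an admissible additive subsemigroup of ℤ^n × ℤ. Then Δ(S) has nonempty interior in ℝ^n if and only if the subgroup of ℤ^n × ℤ ≅ ℤ^{n+1} generated by S has rank n+1 (equivalently, has finite index in ℤ^{n+1}). -/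
open Set

noncomputable section

namespace OkAux

variable {n : ℕ}

/-- latticeEmbed as an AddMonoidHom -/
def latticeHom (n : ℕ) : ((Fin n → ℤ) × ℤ) →+ ((Fin n → ℝ) × ℝ) where
  toFun := latticeEmbed
  map_zero' := by
    simp only [latticeEmbed]
    exact Prod.ext (by funext i; simp) (by simp)
  map_add' a b := by
    simp only [latticeEmbed]
    exact Prod.ext (by funext i; push_cast; simp [Prod.fst_add]) (by push_cast; simp)

/-- the rational embedding -/
def ratHom (n : ℕ) : ((Fin n → ℤ) × ℤ) →+ ((Fin n → ℚ) × ℚ) where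
  toFun x := (fun i => (x.1 i : ℚ), (x.2 : ℚ))
  map_zero' := Prod.ext (by funext i; simp) (by simp)
  map_add' a b := Prod.ext (by funext i; push_cast; simp [Prod.fst_add]) (by push_cast; simp)

lemma ratHom_injective : Function.Injective (ratHom n) := by
  intro a b hab
  have h1 := congrArg Prod.fst hab
  have h2 := congrArg Prod.snd hab
  simp only [ratHom, AddMonoidHom.coe_mk, ZeroHom.coe_mk] at h1 h2
  refine Prod.ext ?_ (by exact_mod_cast h2)
  funext i
  have := congrFun h1 i
  exact_mod_cast this

lemma convex_coneCombos {E : Type*} [AddCommGroup E] [Module ℝ E] (T : Set E) :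
    Convex ℝ (coneCombos T) := by
  rintro x ⟨k, c, t, hc, ht, rfl⟩ y ⟨l, d, u, hd, hu, rfl⟩ a b ha hb hab
  refine ⟨k + l, Fin.append (fun i => a * c i) (fun j => b * d j), Fin.append t u, ?_, ?_, ?_⟩
  · intro i
    refine Fin.addCases (fun i => ?_) (fun i => ?_) i
    · rw [Fin.append_left]; exact mul_nonneg ha (hc i)
    · rw [Fin.append_right]; exact mul_nonneg hb (hd i)
  · intro i
    refine Fin.addCases (fun i => ?_) (fun i => ?_) i
    · rw [Fin.append_left]; exact ht i
    · rw [Fin.append_right]; exact hu i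
  · rw [Fin.sum_univ_add]
    simp only [Fin.append_left, Fin.append_right]
    rw [Finset.smul_sum, Finset.smul_sum]
    congr 1 <;> exact Finset.sum_congr rfl (fun i _ => (mul_smul _ _ _).symm)

lemma convex_okounkovSet (S : Set ((Fin n → ℤ) × ℤ)) : Convex ℝ (okounkovSet S) := by
  have h1 : Convex ℝ (coneOf S) := (convex_coneCombos _).closure
  have h2 : Convex ℝ ({x : (Fin n → ℝ) × ℝ | x.2 = 1}) := by
    intro x hx y hy a b ha hb hab
    simp only [mem_setOf_eq] at *
    simp only [Prod.snd_add, Prod.smul_snd, smul_eq_mul, hx, hy, mul_one]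
    exact hab
  have := (h1.inter h2).linear_image (LinearMap.fst ℝ (Fin n → ℝ) ℝ)
  exact this

lemma mem_okounkovSet {S : Set ((Fin n → ℤ) × ℤ)} {s : (Fin n → ℤ) × ℤ} (hs : s ∈ S)
    (hpos : 0 < s.2) : (fun i => (s.1 i : ℝ) / (s.2 : ℝ)) ∈ okounkovSet S := by
  have hm : (0:ℝ) < (s.2 : ℝ) := by exact_mod_cast hpos
  refine ⟨((fun i => (s.1 i : ℝ) / s.2), 1), ⟨?_, rfl⟩, rfl⟩
  apply subset_closure
  refine ⟨1, fun _ => (s.2:ℝ)⁻¹, fun _ => latticeEmbed s, fun _ => by positivity,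
    fun _ => ⟨s, hs, rfl⟩, ?_⟩
  rw [Fin.sum_univ_one]
  refine Prod.ext ?_ ?_
  · funext i
    simp [latticeEmbed, Prod.smul_def, div_eq_inv_mul]
  · simp [latticeEmbed, Prod.smul_def, inv_mul_cancel₀ hm.ne']


lemma rev_direction (n : ℕ) (hn : 1 ≤ n) (S : Set ((Fin n → ℤ) × ℤ))
    (hsemi : ∀ a ∈ S, ∀ b ∈ S, a + b ∈ S)
    (hadm : ∀ a ∈ S, 0 ≤ a.2)
    (hfin : (AddSubgroup.closure S).FiniteIndex) :
    (interior (okounkovSet S)).Nonempty := by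
  classical
  set G := AddSubgroup.closure S with hG
  set N := G.index with hNdef
  have hN0 : N ≠ 0 := hfin.index_ne_zero
  have hS0 : ∀ a ∈ S, ∀ b ∈ S ∪ {0}, a + b ∈ S := by
    rintro a ha b (hb | hb)
    · exact hsemi a ha b hb
    · simp only [Set.mem_singleton_iff] at hb; simp [hb]; exact ha
  have hU : ∀ a ∈ S ∪ {0}, ∀ b ∈ S ∪ {0}, a + b ∈ S ∪ {0} := by
    rintro a (ha | ha) b hb
    · exact Or.inl (hS0 a ha b hb)
    · simp only [Set.mem_singleton_iff] at ha; simpa [ha] using hb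
  have hUadm : ∀ a ∈ S ∪ {0}, 0 ≤ a.2 := by
    rintro a (ha | ha)
    · exact hadm a ha
    · simp only [Set.mem_singleton_iff] at ha; simp [ha]
  have hdec : ∀ x ∈ G, ∃ p ∈ S ∪ {0}, ∃ q ∈ S ∪ {0}, x = p - q := by
    intro x hx
    refine AddSubgroup.closure_induction ?_ ?_ ?_ ?_ hx
    · exact fun y hy => ⟨y, Or.inl hy, 0, Or.inr rfl, by simp⟩
    · exact ⟨0, Or.inr rfl, 0, Or.inr rfl, by simp⟩
    · rintro y z _ _ ⟨p, hp, q, hq, rfl⟩ ⟨p', hp', q', hq', rfl⟩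
      exact ⟨p + p', hU _ hp _ hp', q + q', hU _ hq _ hq', by abel⟩
    · rintro y _ ⟨p, hp, q, hq, rfl⟩
      exact ⟨q, hq, p, hp, by abel⟩
  have hs0 : ∃ s ∈ S, 0 < s.2 := by
    by_contra h
    push_neg at h
    have hall : ∀ x ∈ G, x.2 = 0 := by
      intro x hx
      refine AddSubgroup.closure_induction ?_ ?_ ?_ ?_ hx
      · intro y hy; exact le_antisymm (h y hy) (hadm y hy)
      · rfl
      · intro y z _ _ hy hz; simp only [Prod.snd_add, hy, hz, add_zero]
      · intro y _ hy; simp only [Prod.snd_neg, hy, neg_zero]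
    have hmem : N • ((0 : Fin n → ℤ), (1:ℤ)) ∈ G :=
      AddSubgroup.nsmul_index_mem G ((0 : Fin n → ℤ), (1:ℤ))
    have h1 := hall _ hmem
    have h2 : (N • ((0 : Fin n → ℤ), (1:ℤ))).2 = (N:ℤ) := by
      rw [Prod.smul_snd]; simp
    rw [h2] at h1
    exact hN0 (by exact_mod_cast h1)
  obtain ⟨s₀, hs₀S, hs₀pos⟩ := hs0
  have hw : ∀ i : Fin n, ∃ p ∈ S ∪ {0}, ∃ q ∈ S ∪ {0},
      (N • ((Pi.single i 1 : Fin n → ℤ), (0:ℤ))) = p - q :=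
    fun i => hdec _ (AddSubgroup.nsmul_index_mem G _)
  choose p hp q hq hpq using hw
  set T := s₀ + ∑ i, q i with hT
  have hsumq : ∑ i, q i ∈ S ∪ {0} :=
    Finset.sum_induction _ _ (fun a b ha hb => hU a ha b hb) (Or.inr rfl) (fun i _ => hq i)
  have hTS : T ∈ S := hS0 _ hs₀S _ hsumq
  have hTpos : 0 < T.2 := by
    have h2 : 0 ≤ (∑ i, q i).2 := hUadm _ hsumq
    have : T.2 = s₀.2 + (∑ i, q i).2 := rfl
    omega
  have hTw : ∀ i, T + N • ((Pi.single i 1 : Fin n → ℤ), (0:ℤ)) ∈ S := by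
    intro i
    have heq : T + N • ((Pi.single i 1 : Fin n → ℤ), (0:ℤ))
        = s₀ + (p i + ∑ j ∈ Finset.univ.erase i, q j) := by
      rw [hpq i, hT, ← Finset.add_sum_erase _ q (Finset.mem_univ i)]
      abel
    rw [heq]
    refine hS0 _ hs₀S _ (hU _ (hp i) _ ?_)
    exact Finset.sum_induction _ _ (fun a b ha hb => hU a ha b hb) (Or.inr rfl) (fun j _ => hq j)
  -- the n+1 points
  set v₀ : Fin n → ℝ := fun j => ((T.1 j : ℝ) / (T.2 : ℝ)) with hv₀
  set vi : Fin n → (Fin n → ℝ) :=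
    fun i => fun j => (((T + N • ((Pi.single i 1 : Fin n → ℤ), (0:ℤ))).1 j : ℝ)
      / (T.2 : ℝ)) with hvi
  have hv0mem : v₀ ∈ okounkovSet S := mem_okounkovSet hTS hTpos
  have hsnd : ∀ i, (T + N • ((Pi.single i 1 : Fin n → ℤ), (0:ℤ))).2 = T.2 := by
    intro i; simp [Prod.snd_add]
  have hvimem : ∀ i, vi i ∈ okounkovSet S := by
    intro i
    have := mem_okounkovSet (hTw i) (by rw [hsnd i]; exact hTpos)
    rw [hsnd i] at this
    exact this
  have hT2pos : (0:ℝ) < (T.2 : ℝ) := by exact_mod_cast hTpos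
  have hNpos : (0:ℝ) < (N : ℝ) := by exact_mod_cast Nat.pos_of_ne_zero hN0
  have hdiff : ∀ i, vi i - v₀ = ((N:ℝ)/(T.2:ℝ)) • (Pi.single i (1:ℝ) : Fin n → ℝ) := by
    intro i
    funext j
    simp only [hvi, hv₀, Pi.sub_apply, Pi.smul_apply, smul_eq_mul, Prod.fst_add, Prod.smul_fst,
      Pi.add_apply, Pi.smul_apply, smul_eq_mul]
    by_cases hj : j = i
    · subst hj
      simp only [Pi.single_eq_same]
      push_cast
      field_simp
      simp [nsmul_eq_mul]
    · simp only [Pi.single_eq_of_ne hj]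
      push_cast [Pi.single_eq_of_ne hj]
      ring
      simp
  rw [(convex_okounkovSet S).interior_nonempty_iff_affineSpan_eq_top]
  have hvs : vectorSpan ℝ (okounkovSet S) = ⊤ := by
    rw [eq_top_iff, ← (Pi.basisFun ℝ (Fin n)).span_eq, Submodule.span_le]
    rintro _ ⟨i, rfl⟩
    rw [Pi.basisFun_apply]
    have hmem : vi i - v₀ ∈ vectorSpan ℝ (okounkovSet S) := by
      have := vsub_mem_vectorSpan ℝ (hvimem i) hv0mem
      simpa [vsub_eq_sub] using this
    have hsingle : (Pi.single i (1:ℝ) : Fin n → ℝ) = ((T.2 : ℝ)/(N:ℝ)) • (vi i - v₀) := by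
      rw [hdiff i, smul_smul]
      rw [div_mul_div_comm, mul_comm ((T.2:ℝ)) ((N:ℝ)), div_self (by positivity), one_smul]
    rw [hsingle]
    exact Submodule.smul_mem _ _ hmem
  refine eq_top_iff.mpr fun x _ => ?_
  have hx : x - v₀ ∈ (affineSpan ℝ (okounkovSet S)).direction := by
    rw [direction_affineSpan, hvs]; trivial
  have := AffineSubspace.vadd_mem_of_mem_direction hx (mem_affineSpan ℝ hv0mem)
  simpa [vadd_eq_add, sub_add_cancel] using this


lemma prod_rep {n : ℕ} {K : Type*} [Field K] (x : (Fin n → K) × K) :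
    x = (∑ i, x.1 i • (((Pi.single i (1:K) : Fin n → K)), (0:K))) + x.2 • ((0:Fin n → K), (1:K)) := by
  refine Prod.ext ?_ ?_
  · rw [Prod.fst_add, Prod.fst_sum, Prod.smul_fst]
    have : ∀ i : Fin n, (x.1 i • (((Pi.single i (1:K) : Fin n → K)), (0:K))).1
        = Pi.single i (x.1 i) := by
      intro i
      rw [Prod.smul_fst]
      rw [← Pi.single_smul]
      simp
    simp only [this]
    rw [Finset.univ_sum_single]
    simp
  · rw [Prod.snd_add, Prod.snd_sum, Prod.smul_snd]
    simp

lemma span_top_of_interior_nonempty {n : ℕ} (S : Set ((Fin n → ℤ) × ℤ))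
    (h : (interior (okounkovSet S)).Nonempty) :
    Submodule.span ℝ (latticeEmbed '' S) = ⊤ := by
  classical
  obtain ⟨α, hα⟩ := h
  obtain ⟨ε, hε, hball⟩ := Metric.isOpen_iff.mp isOpen_interior α hα
  have hsub : Metric.ball α ε ⊆ okounkovSet S := hball.trans interior_subset
  set W := Submodule.span ℝ (latticeEmbed '' S) with hW
  have hcone : coneOf S ⊆ (W : Set ((Fin n → ℝ) × ℝ)) := by
    have h1 : coneCombos (latticeEmbed '' S) ⊆ (W : Set ((Fin n → ℝ) × ℝ)) := by
      rintro x ⟨k, c, t, hc, ht, rfl⟩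
      exact Submodule.sum_mem _ fun i _ => Submodule.smul_mem _ _ (Submodule.subset_span (ht i))
    exact closure_minimal h1 (Submodule.closed_of_finiteDimensional W)
  have hΔ : ∀ β ∈ okounkovSet S, ((β, (1:ℝ)) : (Fin n → ℝ) × ℝ) ∈ W := by
    rintro β ⟨x, ⟨hxc, hx2⟩, rfl⟩
    have hx : ((x.1, (1:ℝ)) : (Fin n → ℝ) × ℝ) = x := Prod.ext rfl hx2.symm
    rw [hx]
    exact hcone hxc
  have hαW : ((α, (1:ℝ)) : (Fin n → ℝ) × ℝ) ∈ W := hΔ α (hsub (Metric.mem_ball_self hε))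
  have hei : ∀ i : Fin n, (((Pi.single i (1:ℝ) : Fin n → ℝ)), (0:ℝ)) ∈ W := by
    intro i
    have hpt : α + (ε/2) • (Pi.single i (1:ℝ) : Fin n → ℝ) ∈ Metric.ball α ε := by
      rw [Metric.mem_ball, dist_eq_norm]
      have heq : α + (ε/2) • (Pi.single i (1:ℝ) : Fin n → ℝ) - α
          = (ε/2) • (Pi.single i (1:ℝ) : Fin n → ℝ) := by abel
      rw [heq, norm_smul, Pi.norm_single]
      simp only [Real.norm_eq_abs, norm_one, mul_one]
      rw [abs_of_pos (by linarith)]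
      linarith
    have h2 : ((α + (ε/2) • (Pi.single i (1:ℝ) : Fin n → ℝ), (1:ℝ)) : (Fin n → ℝ) × ℝ) ∈ W :=
      hΔ _ (hsub hpt)
    have h3 : ((((ε/2) • (Pi.single i (1:ℝ) : Fin n → ℝ) : Fin n → ℝ)), (0:ℝ)) ∈ W := by
      have hs := W.sub_mem h2 hαW
      have heq : ((α + (ε/2) • (Pi.single i (1:ℝ) : Fin n → ℝ), (1:ℝ)) : (Fin n → ℝ) × ℝ)
          - ((α, (1:ℝ)) : (Fin n → ℝ) × ℝ)
          = ((((ε/2) • (Pi.single i (1:ℝ) : Fin n → ℝ) : Fin n → ℝ)), (0:ℝ)) := by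
        refine Prod.ext ?_ ?_
        · rw [Prod.fst_sub]; simp only [Prod.fst]; abel
        · simp
      rwa [heq] at hs
    have hs2 := W.smul_mem (2/ε) h3
    have heq2 : (2/ε) • ((((ε/2) • (Pi.single i (1:ℝ) : Fin n → ℝ) : Fin n → ℝ)), (0:ℝ))
        = (((Pi.single i (1:ℝ) : Fin n → ℝ)), (0:ℝ)) := by
      refine Prod.ext ?_ ?_
      · rw [Prod.smul_fst, smul_smul]
        rw [div_mul_div_comm, mul_comm (2:ℝ) ε, div_self (by positivity), one_smul]
      · simp
    rwa [heq2] at hs2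
  have hlast : (((0 : Fin n → ℝ)), (1:ℝ)) ∈ W := by
    have hsum : (∑ i, α i • (((Pi.single i (1:ℝ) : Fin n → ℝ)), (0:ℝ))) ∈ W :=
      Submodule.sum_mem _ fun i _ => Submodule.smul_mem _ _ (hei i)
    have hs := W.sub_mem hαW hsum
    have heq := prod_rep (K := ℝ) ((α, (1:ℝ)) : (Fin n → ℝ) × ℝ)
    simp only at heq
    have heq2 : ((α, (1:ℝ)) : (Fin n → ℝ) × ℝ)
        - (∑ i, α i • (((Pi.single i (1:ℝ) : Fin n → ℝ)), (0:ℝ)))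
        = (1:ℝ) • (((0 : Fin n → ℝ)), (1:ℝ)) := by
      nth_rewrite 1 [heq]
      abel
    rw [heq2, one_smul] at hs
    exact hs
  rw [eq_top_iff]
  intro x _
  rw [prod_rep (K := ℝ) x]
  exact W.add_mem
    (Submodule.sum_mem _ fun i _ => Submodule.smul_mem _ _ (hei i))
    (Submodule.smul_mem _ _ hlast)


lemma ratSpan_top {n : ℕ} (S : Set ((Fin n → ℤ) × ℤ))
    (hspan : Submodule.span ℝ (latticeEmbed '' S) = ⊤) :
    Submodule.span ℚ ((ratHom n) '' S) = ⊤ := by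
  classical
  by_contra hne
  obtain ⟨f, hf0, hfmap⟩ := Submodule.exists_dual_map_eq_bot_of_lt_top
    (lt_top_iff_ne_top.mpr hne) inferInstance
  have hfzero : ∀ v ∈ Submodule.span ℚ ((ratHom n) '' S), f v = 0 := by
    intro v hv
    have hmem : f v ∈ Submodule.map f (Submodule.span ℚ ((ratHom n) '' S)) := ⟨v, hv, rfl⟩
    rw [hfmap] at hmem
    exact (Submodule.mem_bot ℚ).mp hmem
  -- coefficients of f
  set ci : Fin n → ℚ := fun i => f (((Pi.single i (1:ℚ) : Fin n → ℚ)), (0:ℚ)) with hci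
  set c' : ℚ := f (((0 : Fin n → ℚ)), (1:ℚ)) with hc'
  have hfval : ∀ x : (Fin n → ℚ) × ℚ, f x = (∑ i, x.1 i * ci i) + x.2 * c' := by
    intro x
    nth_rewrite 1 [prod_rep (K := ℚ) x]
    rw [map_add, map_sum, map_smul]
    simp only [smul_eq_mul]
    congr 1
    refine Finset.sum_congr rfl fun i _ => ?_
    rw [map_smul, smul_eq_mul]
  -- build the real functional
  set F : ((Fin n → ℝ) × ℝ) →ₗ[ℝ] ℝ :=
    (∑ i, ((ci i : ℝ)) • ((LinearMap.proj i).comp (LinearMap.fst ℝ (Fin n → ℝ) ℝ)))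
      + ((c' : ℝ)) • LinearMap.snd ℝ (Fin n → ℝ) ℝ with hF
  have hFval : ∀ x : (Fin n → ℝ) × ℝ, F x = (∑ i, x.1 i * (ci i : ℝ)) + x.2 * (c' : ℝ) := by
    intro x
    rw [hF]
    simp only [LinearMap.add_apply, LinearMap.sum_apply, LinearMap.smul_apply,
      LinearMap.coe_comp, Function.comp_apply, LinearMap.fst_apply, LinearMap.snd_apply,
      LinearMap.proj_apply, smul_eq_mul]
    congr 1
    · exact Finset.sum_congr rfl fun i _ => mul_comm _ _
    · exact mul_comm _ _
  have hFS : ∀ s ∈ S, F (latticeEmbed s) = 0 := by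
    intro s hs
    have h1 : f ((ratHom n) s) = 0 :=
      hfzero _ (Submodule.subset_span ⟨s, hs, rfl⟩)
    rw [hfval] at h1
    simp only [ratHom, AddMonoidHom.coe_mk, ZeroHom.coe_mk] at h1
    rw [hFval]
    simp only [latticeEmbed]
    have h2 := congrArg (fun q : ℚ => (q : ℝ)) h1
    simp only [Rat.cast_zero] at h2
    push_cast at h2 ⊢
    convert h2 using 2
  have hFzero : F = 0 := by
    rw [← LinearMap.ker_eq_top, eq_top_iff, ← hspan, Submodule.span_le]
    rintro x ⟨s, hs, rfl⟩
    exact hFS s hs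
  -- deduce coefficients vanish
  have hci0 : ∀ i, ci i = 0 := by
    intro i
    have := congrArg (fun g => g (((Pi.single i (1:ℝ) : Fin n → ℝ)), (0:ℝ)))
      (congrArg DFunLike.coe hFzero)
    simp only [LinearMap.zero_apply] at this
    rw [hFval] at this
    simp only [Pi.single_apply, ite_mul, one_mul, zero_mul, Finset.sum_ite_eq,
      Finset.sum_ite_eq', Finset.mem_univ, if_pos, add_zero, mul_zero, zero_add] at this
    exact_mod_cast this
  have hc'0 : c' = 0 := by
    have := congrArg (fun g => g (((0 : Fin n → ℝ)), (1:ℝ)))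
      (congrArg DFunLike.coe hFzero)
    simp only [LinearMap.zero_apply] at this
    rw [hFval] at this
    simp only [Pi.zero_apply, zero_mul, Finset.sum_const_zero, one_mul, zero_add] at this
    exact_mod_cast this
  apply hf0
  apply LinearMap.ext
  intro x
  rw [hfval, LinearMap.zero_apply]
  simp [hci0, hc'0]

lemma torsion_quot {n : ℕ} (S : Set ((Fin n → ℤ) × ℤ))
    (hQ : Submodule.span ℚ ((ratHom n) '' S) = ⊤)
    (x : (Fin n → ℤ) × ℤ) :
    ∃ m : ℕ, m ≠ 0 ∧ (m:ℤ) • x ∈ AddSubgroup.closure S := by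
  classical
  have hx : (ratHom n) x ∈ Submodule.span ℚ ((ratHom n) '' S) := by
    rw [hQ]; trivial
  obtain ⟨c, hcsupp, hcsum⟩ := Submodule.mem_span_set.mp hx
  set m : ℕ := ∏ v ∈ c.support, (c v).den with hm
  have hm0 : m ≠ 0 := Finset.prod_ne_zero_iff.mpr fun v _ => Rat.den_ne_zero _
  have key : ∀ v ∈ c.support, ((((m:ℚ) * c v).num : ℚ)) = (m:ℚ) * c v := by
    intro v hv
    obtain ⟨e, he⟩ := Finset.dvd_prod_of_mem (fun v => (c v).den) hv
    have h1 : (m:ℚ) * c v = (((c v).num * (e:ℤ) : ℤ) : ℚ) := by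
      have hm2 : (m:ℚ) = ((c v).den : ℚ) * (e : ℚ) := by exact_mod_cast he
      have hq : c v * ((c v).den:ℚ) = ((c v).num:ℚ) := Rat.mul_den_eq_num _
      push_cast
      calc ((m:ℚ)) * c v = (c v * ((c v).den:ℚ)) * e := by rw [hm2]; ring
        _ = ((c v).num:ℚ) * e := by rw [hq]
    rw [h1, Rat.num_intCast]
  -- preimage function
  set g : ((Fin n → ℚ) × ℚ) → ((Fin n → ℤ) × ℤ) :=
    fun v => if h : v ∈ (ratHom n) '' S then h.choose else 0 with hg
  have hgS : ∀ v ∈ c.support, g v ∈ S ∧ (ratHom n) (g v) = v := by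
    intro v hv
    have hvS : v ∈ (ratHom n) '' S := hcsupp hv
    simp only [hg, dif_pos hvS]
    exact ⟨hvS.choose_spec.1, hvS.choose_spec.2⟩
  refine ⟨m, hm0, ?_⟩
  have hinj := ratHom_injective (n := n)
  have heq : (m:ℤ) • x = ∑ v ∈ c.support, ((m:ℚ) * c v).num • g v := by
    apply hinj
    rw [map_zsmul, map_sum]
    have hL : (m:ℤ) • (ratHom n) x = ((m:ℚ)) • (ratHom n) x := by
      rw [← Int.cast_smul_eq_zsmul ℚ]
      norm_num
    rw [hL]
    simp only [map_zsmul]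
    have hR : ∀ v ∈ c.support, ((m:ℚ) * c v).num • (ratHom n) (g v)
        = ((m:ℚ)) • (c v • v) := by
      intro v hv
      rw [(hgS v hv).2, ← Int.cast_smul_eq_zsmul ℚ, key v hv, smul_smul]
    rw [Finset.sum_congr rfl hR, ← Finset.smul_sum]
    congr 1
    rw [← hcsum]
    rfl
  rw [heq]
  exact AddSubgroup.sum_mem _ fun v hv =>
    AddSubgroup.zsmul_mem _ (AddSubgroup.subset_closure (hgS v hv).1) _

end OkAux

/-- For an admissible additive subsemigroup `S ⊆ ℤ^n × ℤ`, the Okounkov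
convex set `Δ(S)` has nonempty interior in `ℝ^n` if and only if the subgroup of
`ℤ^n × ℤ ≅ ℤ^{n+1}` generated by `S` has rank `n+1`, equivalently finite index. -/
theorem nonempty_interior_okounkovSet_iff_finiteIndex (n : ℕ) (hn : 1 ≤ n)
    (S : Set ((Fin n → ℤ) × ℤ))
    (hsemi : ∀ a ∈ S, ∀ b ∈ S, a + b ∈ S)
    (hadm : ∀ a ∈ S, 0 ≤ a.2) :
    (interior (okounkovSet S)).Nonempty ↔ (AddSubgroup.closure S).FiniteIndex := by
  constructor
  · intro h
    have hspan := OkAux.span_top_of_interior_nonempty S h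
    have hQ := OkAux.ratSpan_top S hspan
    haveI : AddGroup.FG ((Fin n → ℤ) × ℤ) :=
      (Module.Finite.iff_addGroup_fg (G := (Fin n → ℤ) × ℤ)).mp inferInstance
    set G := AddSubgroup.closure S with hG
    haveI : AddGroup.FG (((Fin n → ℤ) × ℤ) ⧸ G) :=
      AddGroup.fg_of_surjective (f := QuotientAddGroup.mk' G) (QuotientAddGroup.mk'_surjective G)
    have htor : AddMonoid.IsTorsion (((Fin n → ℤ) × ℤ) ⧸ G) := by
      intro y
      obtain ⟨x, rfl⟩ := QuotientAddGroup.mk'_surjective G y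
      obtain ⟨m, hm0, hmem⟩ := OkAux.torsion_quot S hQ x
      rw [isOfFinAddOrder_iff_nsmul_eq_zero]
      refine ⟨m, Nat.pos_of_ne_zero hm0, ?_⟩
      have h1 : m • (QuotientAddGroup.mk' G x) = QuotientAddGroup.mk' G (m • x) :=
        (map_nsmul (QuotientAddGroup.mk' G) m x).symm
      rw [h1, QuotientAddGroup.mk'_apply, QuotientAddGroup.eq_zero_iff]
      rw [← natCast_zsmul]
      exact hmem
    haveI : Finite (((Fin n → ℤ) × ℤ) ⧸ G) := AddCommGroup.finite_of_fg_torsion _ htor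
    exact AddSubgroup.finiteIndex_of_finite_quotient
  · exact OkAux.rev_direction n hn S hsemi hadm
end
end

section
/- Let K be a field, V a finite-dimensional K-vector space, N ≥ 1, and ≺ a total additive order on ℤ^n. For j = 1, …, N let ν_j : V∖{0} → ℤ^n be a prevaluation with respect to ≺ that has one-dimensional leaves. Define W_j := {s ∈ V∖{0} : ν_j(s) ⪯ ν_i(s) for all i with 1 ≤ i ≤ j, and ν_j(s) ≺ ν_i(s) for all i with j < i ≤ N}. Then each image ν_j(W_j) ⊆ ℤ^n is finite and Σ_{j=1}^N #ν_j(W_j) = dim_K V. -/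
open Set

section CorePreval

variable {K V G : Type*} [Field K] [AddCommGroup V] [Module K V] [LinearOrder G]

private lemma preval_sum_aux (μ : V → G)
    (hval : ∀ f g : V, f ≠ 0 → g ≠ 0 → f + g ≠ 0 → min (μ f) (μ g) ≤ μ (f + g)) :
    ∀ {ι : Type*} (s : Finset ι) (g : ι → V), (∀ i ∈ s, g i ≠ 0) →
      (∑ i ∈ s, g i) ≠ 0 → ∃ i ∈ s, μ (g i) ≤ μ (∑ i ∈ s, g i) := by
  intro ι s
  classical
  induction s using Finset.induction_on with
  | empty => intro g _ h; simp at h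
  | @insert a s ha ih =>
    intro g hg hsum
    rw [Finset.sum_insert ha] at hsum ⊢
    by_cases hz : ∑ i ∈ s, g i = 0
    · refine ⟨a, Finset.mem_insert_self _ _, ?_⟩
      rw [hz, add_zero]
    · have hga : g a ≠ 0 := hg a (Finset.mem_insert_self _ _)
      have hm := hval (g a) _ hga hz hsum
      rcases min_cases (μ (g a)) (μ (∑ i ∈ s, g i)) with ⟨h1, _⟩ | ⟨h1, _⟩
      · exact ⟨a, Finset.mem_insert_self _ _, h1 ▸ hm⟩
      · obtain ⟨i, hi, hle⟩ := ih g (fun i hi => hg i (Finset.mem_insert_of_mem hi)) hz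
        exact ⟨i, Finset.mem_insert_of_mem hi, le_trans hle (h1 ▸ hm)⟩

private lemma preval_core [FiniteDimensional K V] (μ : V → G)
    (hval : ∀ f g : V, f ≠ 0 → g ≠ 0 → f + g ≠ 0 → min (μ f) (μ g) ≤ μ (f + g))
    (hscal : ∀ (c : K) (f : V), c ≠ 0 → f ≠ 0 → μ (c • f) = μ f)
    (hleaf : ∀ f g : V, f ≠ 0 → g ≠ 0 → μ f = μ g →
      ∃ c : K, c ≠ 0 ∧ (f = c • g ∨ μ f < μ (f - c • g))) :
    (μ '' {v | v ≠ 0}).Finite ∧ (μ '' {v | v ≠ 0}).ncard = Module.finrank K V := by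
  classical
  have hrep : ∀ γ : (μ '' {v | v ≠ 0} : Set G), ∃ v : V, v ≠ 0 ∧ μ v = γ := by
    rintro ⟨γ, v, hv, rfl⟩; exact ⟨v, hv, rfl⟩
  choose rep hrep0 hrepμ using hrep
  have li : LinearIndependent K rep := by
    rw [linearIndependent_iff']
    intro s g hsum i hi
    by_contra hgi
    set t := s.filter fun i => g i ≠ 0 with ht
    have hts : ∑ i ∈ t, g i • rep i = 0 := by
      rw [ht, Finset.sum_filter_of_ne, hsum]
      intro x _ hx hgx
      exact hx (by rw [hgx, zero_smul])
    have hit : i ∈ t := Finset.mem_filter.2 ⟨hi, hgi⟩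
    obtain ⟨m, hmt, hmin⟩ := Finset.exists_min_image t (fun i => μ (rep i)) ⟨i, hit⟩
    have hgm : g m ≠ 0 := (Finset.mem_filter.1 hmt).2
    have hsum' : g m • rep m + ∑ i ∈ t.erase m, g i • rep i = 0 :=
      (Finset.add_sum_erase t (fun i => g i • rep i) hmt).trans hts
    have hrest : ∑ i ∈ t.erase m, g i • rep i = -(g m • rep m) :=
      eq_neg_of_add_eq_zero_right hsum'
    have hne : g m • rep m ≠ 0 := smul_ne_zero hgm (hrep0 m)
    have hrne : ∑ i ∈ t.erase m, g i • rep i ≠ 0 := by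
      rw [hrest]; exact neg_ne_zero.2 hne
    obtain ⟨jj, hjj, hle⟩ := preval_sum_aux μ hval (t.erase m) (fun i => g i • rep i)
      (fun x hx => smul_ne_zero (Finset.mem_filter.1 (Finset.mem_of_mem_erase hx)).2 (hrep0 x))
      hrne
    have hgj : g jj ≠ 0 := (Finset.mem_filter.1 (Finset.mem_of_mem_erase hjj)).2
    have h1 : μ (rep jj) ≤ μ (rep m) := by
      have e1 : μ (g jj • rep jj) = μ (rep jj) := hscal _ _ hgj (hrep0 jj)
      have e2 : μ (∑ i ∈ t.erase m, g i • rep i) = μ (rep m) := by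
        rw [hrest, ← neg_smul]; exact hscal _ _ (neg_ne_zero.2 hgm) (hrep0 m)
      rw [e1, e2] at hle; exact hle
    have h2 : μ (rep m) ≤ μ (rep jj) := hmin jj (Finset.mem_of_mem_erase hjj)
    have hjm : (jj : G) = (m : G) := by
      rw [← hrepμ jj, ← hrepμ m]; exact le_antisymm h1 h2
    exact (Finset.ne_of_mem_erase hjj) (Subtype.ext hjm)
  have hfin : (μ '' {v | v ≠ 0}).Finite := by
    haveI : Finite ↥(μ '' {v | v ≠ 0}) := li.finite_of_isNoetherian
    exact Set.toFinite _
  have hspan : ∀ v : V, v ∈ Submodule.span K (Set.range rep) := by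
    by_contra hcon
    push_neg at hcon
    have hUne : {v : V | v ≠ 0 ∧ v ∉ Submodule.span K (Set.range rep)}.Nonempty := by
      obtain ⟨v, hv⟩ := hcon
      exact ⟨v, fun h0 => hv (by rw [h0]; exact Submodule.zero_mem _), hv⟩
    have himgsub : μ '' {v : V | v ≠ 0 ∧ v ∉ Submodule.span K (Set.range rep)} ⊆
        μ '' {v | v ≠ 0} := Set.image_mono (fun v hv => hv.1)
    obtain ⟨γ, hγ, hmax⟩ := Set.Finite.exists_maximalFor id _ (hfin.subset himgsub)
      (hUne.image μ)
    obtain ⟨v, hvU, rfl⟩ := hγ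
    have hvS : μ v ∈ μ '' {v : V | v ≠ 0} := ⟨v, hvU.1, rfl⟩
    have hμr : μ (rep ⟨μ v, hvS⟩) = μ v := hrepμ ⟨μ v, hvS⟩
    obtain ⟨c, hc, hor⟩ := hleaf v (rep ⟨μ v, hvS⟩) hvU.1 (hrep0 _) hμr.symm
    have hspan_rep : rep ⟨μ v, hvS⟩ ∈ Submodule.span K (Set.range rep) :=
      Submodule.subset_span (Set.mem_range_self _)
    by_cases hvc : v = c • rep ⟨μ v, hvS⟩
    · exact hvU.2 (hvc ▸ Submodule.smul_mem _ c hspan_rep)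
    · rcases hor with h | hlt
      · exact hvc h
      · have hw0 : v - c • rep ⟨μ v, hvS⟩ ≠ 0 := sub_ne_zero.2 hvc
        have hwspan : v - c • rep ⟨μ v, hvS⟩ ∉ Submodule.span K (Set.range rep) := by
          intro hmem
          apply hvU.2
          have hv' : v = (v - c • rep ⟨μ v, hvS⟩) + c • rep ⟨μ v, hvS⟩ := by abel
          rw [hv']
          exact Submodule.add_mem _ hmem (Submodule.smul_mem _ _ hspan_rep)
        have hwU : μ (v - c • rep ⟨μ v, hvS⟩) ∈
            μ '' {v : V | v ≠ 0 ∧ v ∉ Submodule.span K (Set.range rep)} :=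
          ⟨_, ⟨hw0, hwspan⟩, rfl⟩
        exact (not_le.2 hlt) (hmax hwU (le_of_lt hlt))
  have hb : Module.Basis ↥(μ '' {v | v ≠ 0}) K V := Module.Basis.mk li (fun v _ => hspan v)
  haveI : Fintype ↥(μ '' {v | v ≠ 0}) := hfin.fintype
  refine ⟨hfin, ?_⟩
  rw [Module.finrank_eq_card_basis hb, ← Nat.card_coe_set_eq, Nat.card_eq_fintype_card]

end CorePreval

/-- Type synonym for `Fin n → ℤ`, carrying no order instances. -/
private def PVPt (n : ℕ) : Type := Fin n → ℤ

/-- The identity map into the synonym. -/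
private def toPt {n : ℕ} (x : Fin n → ℤ) : PVPt n := x

section JAux

variable {V : Type*} [AddCommGroup V] {n N : ℕ}

private noncomputable def pA (lo : LinearOrder (Fin n → ℤ)) (ν : Fin N → V → Fin n → ℤ)
    (v : V) : Finset (Fin N) :=
  @Finset.filter _ (fun j => ∀ i, lo.le (ν j v) (ν i v)) (Classical.decPred _) Finset.univ

private lemma pA_mem {lo : LinearOrder (Fin n → ℤ)} {ν : Fin N → V → Fin n → ℤ} {v : V}
    {j : Fin N} : j ∈ pA lo ν v ↔ ∀ i, lo.le (ν j v) (ν i v) := by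
  simp [pA]

private lemma pA_nonempty (hN : 1 ≤ N) (lo : LinearOrder (Fin n → ℤ))
    (ν : Fin N → V → Fin n → ℤ) (v : V) : (pA lo ν v).Nonempty := by
  letI : LinearOrder (PVPt n) := lo
  haveI : Nonempty (Fin N) := ⟨⟨0, hN⟩⟩
  obtain ⟨j, -, hj⟩ := Finset.exists_min_image (Finset.univ : Finset (Fin N))
    (fun j => toPt (ν j v)) ⟨Classical.arbitrary _, Finset.mem_univ _⟩
  exact ⟨j, pA_mem.2 fun i => hj i (Finset.mem_univ _)⟩

private noncomputable def pJ (hN : 1 ≤ N) (lo : LinearOrder (Fin n → ℤ))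
    (ν : Fin N → V → Fin n → ℤ) (v : V) : Fin N :=
  (pA lo ν v).max' (pA_nonempty hN lo ν v)

private lemma pJ_min (hN : 1 ≤ N) (lo : LinearOrder (Fin n → ℤ))
    (ν : Fin N → V → Fin n → ℤ) (v : V) (i : Fin N) :
    lo.le (ν (pJ hN lo ν v) v) (ν i v) :=
  (pA_mem.1 ((pA lo ν v).max'_mem _)) i

private lemma pJ_lt (hN : 1 ≤ N) (lo : LinearOrder (Fin n → ℤ))
    (ν : Fin N → V → Fin n → ℤ) (v : V) (i : Fin N) (h : pJ hN lo ν v < i) :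
    lo.lt (ν (pJ hN lo ν v) v) (ν i v) := by
  letI : LinearOrder (PVPt n) := lo
  by_contra hcon
  have hcon' : ¬ (toPt (ν (pJ hN lo ν v) v) < toPt (ν i v)) := hcon
  have hle : toPt (ν i v) ≤ toPt (ν (pJ hN lo ν v) v) := not_lt.1 hcon'
  have hminle : toPt (ν (pJ hN lo ν v) v) ≤ toPt (ν i v) := pJ_min hN lo ν v i
  have heq : toPt (ν i v) = toPt (ν (pJ hN lo ν v) v) := le_antisymm hle hminle
  have hmem : i ∈ pA lo ν v := pA_mem.2 fun k => by
    have : toPt (ν i v) ≤ toPt (ν k v) := heq ▸ (pJ_min hN lo ν v k : toPt _ ≤ toPt _)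
    exact this
  exact absurd (Finset.le_max' _ i hmem) (not_le.2 h)

private lemma pJ_congr (hN : 1 ≤ N) (lo : LinearOrder (Fin n → ℤ))
    (ν : Fin N → V → Fin n → ℤ) {v w : V} (h : ∀ i, ν i v = ν i w) :
    pJ hN lo ν v = pJ hN lo ν w := by
  have hA : pA lo ν v = pA lo ν w := by
    ext j; simp only [pA_mem, h]
  simp only [pJ, hA]

private lemma pW_iff (hN : 1 ≤ N) (lo : LinearOrder (Fin n → ℤ))
    (ν : Fin N → V → Fin n → ℤ) (j : Fin N) (s : V) :
    ((∀ i, i ≤ j → lo.le (ν j s) (ν i s)) ∧ (∀ i, j < i → lo.lt (ν j s) (ν i s)))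
      ↔ pJ hN lo ν s = j := by
  letI : LinearOrder (PVPt n) := lo
  constructor
  · rintro ⟨h1, h2⟩
    have hmem : j ∈ pA lo ν s := pA_mem.2 fun i => by
      rcases le_or_gt i j with h | h
      · exact h1 i h
      · have hx : toPt (ν j s) ≤ toPt (ν i s) := le_of_lt (h2 i h)
        exact hx
    have hle : j ≤ pJ hN lo ν s := Finset.le_max' _ j hmem
    rcases eq_or_lt_of_le hle with h | h
    · exact h.symm
    · exact absurd (show toPt (ν j s) < toPt (ν (pJ hN lo ν s) s) from h2 _ h)
        (not_lt.2 (pJ_min hN lo ν s j))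
  · rintro rfl
    exact ⟨fun i _ => pJ_min hN lo ν s i, fun i hi => pJ_lt hN lo ν s i hi⟩

end JAux


/-- Let `V` be a finite-dimensional `K`-vector space, `≺` a total
additive order on `ℤ^n` and, for `j = 1, …, N`, let `ν_j : V∖{0} → ℤ^n` be a
prevaluation with one-dimensional leaves.  With
`W_j = {s ≠ 0 : ν_j(s) ⪯ ν_i(s) for i ≤ j and ν_j(s) ≺ ν_i(s) for i > j}`,
each image `ν_j(W_j)` is finite and `Σ_j #ν_j(W_j) = dim_K V`. -/
theorem sum_ncard_image_multipoint_prevaluation_eq_finrank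
    (K V : Type*) [Field K] [AddCommGroup V] [Module K V] [FiniteDimensional K V]
    (n N : ℕ) (hN : 1 ≤ N)
    (lo : LinearOrder (Fin n → ℤ))
    (hadd : ∀ α β δ : Fin n → ℤ, lo.lt α β → lo.lt (α + δ) (β + δ))
    (ν : Fin N → V → (Fin n → ℤ))
    (hval : ∀ j : Fin N, ∀ f g : V, f ≠ 0 → g ≠ 0 → f + g ≠ 0 →
      lo.le (lo.min (ν j f) (ν j g)) (ν j (f + g)))
    (hscal : ∀ j : Fin N, ∀ (c : K) (f : V), c ≠ 0 → f ≠ 0 → ν j (c • f) = ν j f)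
    (hleaf : ∀ j : Fin N, ∀ f g : V, f ≠ 0 → g ≠ 0 → ν j f = ν j g →
      ∃ c : K, c ≠ 0 ∧ (f = c • g ∨ lo.lt (ν j f) (ν j (f - c • g)))) :
    (∀ j : Fin N,
      (ν j '' {s : V | s ≠ 0 ∧ (∀ i : Fin N, i ≤ j → lo.le (ν j s) (ν i s)) ∧
        (∀ i : Fin N, j < i → lo.lt (ν j s) (ν i s))}).Finite) ∧
    ∑ j : Fin N,
      (ν j '' {s : V | s ≠ 0 ∧ (∀ i : Fin N, i ≤ j → lo.le (ν j s) (ν i s)) ∧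
        (∀ i : Fin N, j < i → lo.lt (ν j s) (ν i s))}).ncard
      = Module.finrank K V := by
  classical
  letI : LinearOrder (PVPt n) := lo
  let J : V → Fin N := pJ hN lo ν
  let μ : V → Lex ((PVPt n) × (Fin N)ᵒᵈ) :=
    fun v => toLex (toPt (ν (J v) v), OrderDual.toDual (J v))
  have hμdef : ∀ v, μ v = toLex (toPt (ν (J v) v), OrderDual.toDual (J v)) := fun _ => rfl
  have hJmin : ∀ (v : V) (i : Fin N), toPt (ν (J v) v) ≤ toPt (ν i v) :=
    fun v i => pJ_min hN lo ν v i
  have hJlt : ∀ (v : V) (i : Fin N), J v < i → toPt (ν (J v) v) < toPt (ν i v) :=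
    fun v i h => pJ_lt hN lo ν v i h
  have hval' : ∀ (j : Fin N) (f g : V), f ≠ 0 → g ≠ 0 → f + g ≠ 0 →
      min (toPt (ν j f)) (toPt (ν j g)) ≤ toPt (ν j (f + g)) :=
    fun j f g hf hg hfg => hval j f g hf hg hfg
  -- scaling
  have hμscal : ∀ (c : K) (f : V), c ≠ 0 → f ≠ 0 → μ (c • f) = μ f := by
    intro c f hc hf
    have hν : ∀ i, ν i (c • f) = ν i f := fun i => hscal i c f hc hf
    have hJ : J (c • f) = J f := pJ_congr hN lo ν hν
    rw [hμdef, hμdef, hJ, hν]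
  -- key half of valuation property
  have hkey : ∀ f g : V, f ≠ 0 → g ≠ 0 → f + g ≠ 0 → μ f ≤ μ g → μ f ≤ μ (f + g) := by
    intro f g hf hg hfg hle
    rw [hμdef, hμdef, Prod.Lex.le_iff] at hle
    dsimp only [ofLex_toLex] at hle
    have h1 : toPt (ν (J f) f) ≤ toPt (ν (J g) g) := by
      rcases hle with h | ⟨h, -⟩
      · exact le_of_lt h
      · exact le_of_eq h
    have hm : min (toPt (ν (J (f + g)) f)) (toPt (ν (J (f + g)) g)) ≤
        toPt (ν (J (f + g)) (f + g)) := hval' _ f g hf hg hfg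
    have h2 : toPt (ν (J f) f) ≤ toPt (ν (J (f + g)) (f + g)) := by
      refine le_trans ?_ hm
      refine le_trans ?_ (min_le_min (hJmin f _) (hJmin g _))
      exact le_of_eq (min_eq_left h1).symm
    rw [hμdef, hμdef, Prod.Lex.le_iff]
    dsimp only [ofLex_toLex]
    rcases lt_or_eq_of_le h2 with h | h
    · exact Or.inl h
    · refine Or.inr ⟨h, ?_⟩
      rw [OrderDual.toDual_le_toDual]
      by_contra hcc
      have hlt : J f < J (f + g) := not_le.1 hcc
      have hff : toPt (ν (J f) f) < toPt (ν (J (f + g)) f) := hJlt f _ hlt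
      have hgg : toPt (ν (J f) f) < toPt (ν (J (f + g)) g) := by
        rcases hle with h' | ⟨h', hba⟩
        · exact lt_of_lt_of_le h' (hJmin g _)
        · rw [OrderDual.toDual_le_toDual] at hba
          have hgc : J g < J (f + g) := lt_of_le_of_lt hba hlt
          rw [h']
          exact hJlt g _ hgc
      have hcon : toPt (ν (J f) f) < toPt (ν (J (f + g)) (f + g)) :=
        lt_of_lt_of_le (lt_min hff hgg) hm
      exact absurd h (ne_of_lt hcon)
  have hμval : ∀ f g : V, f ≠ 0 → g ≠ 0 → f + g ≠ 0 → min (μ f) (μ g) ≤ μ (f + g) := by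
    intro f g hf hg hfg
    rcases le_total (μ f) (μ g) with h | h
    · exact le_trans (min_le_left _ _) (hkey f g hf hg hfg h)
    · have h' := hkey g f hg hf (by rwa [add_comm]) h
      rw [add_comm g f] at h'
      exact le_trans (min_le_right _ _) h'
  -- leaves
  have hμleaf : ∀ f g : V, f ≠ 0 → g ≠ 0 → μ f = μ g →
      ∃ c : K, c ≠ 0 ∧ (f = c • g ∨ μ f < μ (f - c • g)) := by
    intro f g hf hg he
    have hJe : J f = J g := congrArg (fun p => OrderDual.ofDual (ofLex p).2) he
    have hνe : toPt (ν (J f) f) = toPt (ν (J g) g) := congrArg (fun p => (ofLex p).1) he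
    rw [hJe] at hνe
    obtain ⟨c, hc, hor⟩ := hleaf (J g) f g hf hg hνe
    refine ⟨c, hc, ?_⟩
    by_cases hfc : f = c • g
    · exact Or.inl hfc
    right
    have hlt : toPt (ν (J g) f) < toPt (ν (J g) (f - c • g)) := by
      rcases hor with h | h
      · exact absurd h hfc
      · exact h
    have hw0 : f - c • g ≠ 0 := sub_ne_zero.2 hfc
    have hcg : (-c) • g ≠ 0 := smul_ne_zero (neg_ne_zero.2 hc) hg
    have hsum : f + (-c) • g = f - c • g := by rw [neg_smul, ← sub_eq_add_neg]
    have hm0 : min (toPt (ν (J (f - c • g)) f)) (toPt (ν (J (f - c • g)) ((-c) • g))) ≤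
        toPt (ν (J (f - c • g)) (f + (-c) • g)) :=
      hval' (J (f - c • g)) f ((-c) • g) hf hcg (by rw [hsum]; exact hw0)
    rw [hsum, hscal (J (f - c • g)) (-c) g (neg_ne_zero.2 hc) hg] at hm0
    have h2 : toPt (ν (J g) f) ≤ toPt (ν (J (f - c • g)) (f - c • g)) := by
      have ha : toPt (ν (J g) f) ≤ toPt (ν (J (f - c • g)) f) := by
        rw [← hJe]; exact hJmin f _
      have hb : toPt (ν (J g) g) ≤ toPt (ν (J (f - c • g)) g) := hJmin g _
      calc toPt (ν (J g) f) = min (toPt (ν (J g) f)) (toPt (ν (J g) g)) := by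
            rw [hνe, min_self]
        _ ≤ min (toPt (ν (J (f - c • g)) f)) (toPt (ν (J (f - c • g)) g)) := min_le_min ha hb
        _ ≤ toPt (ν (J (f - c • g)) (f - c • g)) := hm0
    rw [hμdef, hμdef, Prod.Lex.lt_iff]
    dsimp only [ofLex_toLex]
    rcases lt_or_eq_of_le h2 with h | h
    · left; rw [hJe]; exact h
    · right
      refine ⟨by rw [hJe]; exact h, ?_⟩
      rw [OrderDual.toDual_lt_toDual, hJe]
      by_contra hcc
      have hge : J g ≤ J (f - c • g) := not_lt.1 hcc
      rcases eq_or_lt_of_le hge with hEq | hLt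
      · rw [hEq] at hlt h
        exact absurd h (ne_of_lt hlt)
      · have hff : toPt (ν (J g) f) < toPt (ν (J (f - c • g)) f) := by
          have h3 := hJlt f (J (f - c • g)) (by rw [hJe]; exact hLt)
          rw [hJe] at h3; exact h3
        have hgg : toPt (ν (J g) f) < toPt (ν (J (f - c • g)) g) := by
          rw [hνe]; exact hJlt g _ hLt
        have hcon : toPt (ν (J g) f) < toPt (ν (J (f - c • g)) (f - c • g)) :=
          lt_of_lt_of_le (lt_min hff hgg) hm0
        exact absurd h (ne_of_lt hcon)
  obtain ⟨hFin, hCard⟩ := preval_core (K := K) μ hμval hμscal hμleaf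
  -- rewrite the sets
  have hWeq : ∀ j : Fin N,
      {s : V | s ≠ 0 ∧ (∀ i : Fin N, i ≤ j → lo.le (ν j s) (ν i s)) ∧
        (∀ i : Fin N, j < i → lo.lt (ν j s) (ν i s))} = {s : V | s ≠ 0 ∧ J s = j} := by
    intro j
    ext s
    simp only [Set.mem_setOf_eq]
    constructor
    · rintro ⟨h0, h1, h2⟩
      exact ⟨h0, (pW_iff hN lo ν j s).1 ⟨h1, h2⟩⟩
    · rintro ⟨h0, hJ⟩
      obtain ⟨h1, h2⟩ := (pW_iff hN lo ν j s).2 hJ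
      exact ⟨h0, h1, h2⟩
  simp only [hWeq]
  -- images
  have hinj : ∀ j : Fin N,
      Function.Injective
        (fun α => (toLex (toPt α, OrderDual.toDual j) : Lex ((PVPt n) × (Fin N)ᵒᵈ))) := by
    intro j a b hab
    exact congrArg (fun x => (ofLex x).1) hab
  have hImg : μ '' {v : V | v ≠ 0} =
      ⋃ j : Fin N, (fun α => (toLex (toPt α, OrderDual.toDual j) :
          Lex ((PVPt n) × (Fin N)ᵒᵈ))) '' (ν j '' {s : V | s ≠ 0 ∧ J s = j}) := by
    ext x
    simp only [Set.mem_image, Set.mem_iUnion, Set.mem_setOf_eq]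
    constructor
    · rintro ⟨v, hv, rfl⟩
      exact ⟨J v, ν (J v) v, ⟨v, ⟨hv, rfl⟩, rfl⟩, rfl⟩
    · rintro ⟨j, α, ⟨v, ⟨h0, hJ⟩, rfl⟩, rfl⟩
      exact ⟨v, h0, by rw [hμdef, hJ]⟩
  have hfinS : ∀ j : Fin N,
      ((fun α => (toLex (toPt α, OrderDual.toDual j) : Lex ((PVPt n) × (Fin N)ᵒᵈ))) ''
        (ν j '' {s : V | s ≠ 0 ∧ J s = j})).Finite := by
    intro j
    refine hFin.subset ?_
    rw [hImg]
    exact Set.subset_iUnion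
      (fun j => (fun α => (toLex (toPt α, OrderDual.toDual j) : Lex ((PVPt n) × (Fin N)ᵒᵈ))) ''
        (ν j '' {s : V | s ≠ 0 ∧ J s = j})) j
  have hfinSj : ∀ j : Fin N, (ν j '' {s : V | s ≠ 0 ∧ J s = j}).Finite :=
    fun j => Set.Finite.of_finite_image (hfinS j) ((hinj j).injOn)
  refine ⟨hfinSj, ?_⟩
  -- counting
  have hTdisj : ∀ j ∈ (Finset.univ : Finset (Fin N)), ∀ k ∈ (Finset.univ : Finset (Fin N)),
      j ≠ k → Disjoint ((hfinS j).toFinset) ((hfinS k).toFinset) := by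
    intro j _ k _ hjk
    rw [Finset.disjoint_left]
    intro x hxj hxk
    simp only [Set.Finite.mem_toFinset, Set.mem_image] at hxj hxk
    obtain ⟨a, -, rfl⟩ := hxj
    obtain ⟨b, -, hbx⟩ := hxk
    exact hjk (congrArg
      (fun x : Lex ((PVPt n) × (Fin N)ᵒᵈ) => OrderDual.ofDual (ofLex x).2) hbx).symm
  have hbiUnion : hFin.toFinset = Finset.univ.biUnion (fun j => (hfinS j).toFinset) := by
    ext x
    simp only [Set.Finite.mem_toFinset, Finset.mem_biUnion, Finset.mem_univ, true_and]
    rw [hImg]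
    simp only [Set.mem_iUnion, Set.Finite.mem_toFinset]
  have hsum1 : (μ '' {v : V | v ≠ 0}).ncard = ∑ j : Fin N, ((hfinS j).toFinset).card := by
    rw [Set.ncard_eq_toFinset_card _ hFin, hbiUnion, Finset.card_biUnion hTdisj]
  have hsum2 : ∀ j : Fin N,
      ((hfinS j).toFinset).card = (ν j '' {s : V | s ≠ 0 ∧ J s = j}).ncard := by
    intro j
    rw [← Set.ncard_eq_toFinset_card _ (hfinS j)]
    exact Set.ncard_image_of_injective _ (hinj j)
  calc ∑ j : Fin N, (ν j '' {s : V | s ≠ 0 ∧ J s = j}).ncard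
      = ∑ j : Fin N, ((hfinS j).toFinset).card :=
        Finset.sum_congr rfl fun j _ => (hsum2 j).symm
    _ = (μ '' {v : V | v ≠ 0}).ncard := hsum1.symm
    _ = Module.finrank K V := hCard
end

section
/- Let K be a field, V a K-vector space, ≺ a total additive order on ℤ^n, and ν : V∖{0} → ℤ^n a prevaluation with one-dimensional leaves. Then for every finite-dimensional subspace W ⊆ V, the image ν(W∖{0}) is finite and #ν(W∖{0}) = dim_K W. -/
open Set

section Helpers

variable {K V : Type*} [Field K] [AddCommGroup V] [Module K V] {n : ℕ}

private lemma preval_neg (ν : V → (Fin n → ℤ))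
    (hscal : ∀ (c : K) (f : V), c ≠ 0 → f ≠ 0 → ν (c • f) = ν f)
    (g : V) (hg : g ≠ 0) : ν (-g) = ν g := by
  have h := hscal (-1) g (by norm_num) hg
  rwa [neg_one_smul] at h

private lemma preval_min (lo : LinearOrder (Fin n → ℤ)) (ν : V → (Fin n → ℤ))
    (hval : ∀ f g : V, f ≠ 0 → g ≠ 0 → f + g ≠ 0 →
      lo.le (lo.min (ν f) (ν g)) (ν (f + g)))
    (hscal : ∀ (c : K) (f : V), c ≠ 0 → f ≠ 0 → ν (c • f) = ν f)
    (f g : V) (hf : f ≠ 0) (hg : g ≠ 0) (hlt : lo.lt (ν f) (ν g)) :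
    f + g ≠ 0 ∧ ν (f + g) = ν f := by
  have hne : f + g ≠ 0 := by
    intro h
    have hfg : f = -g := by
      rw [eq_neg_iff_add_eq_zero]; exact h
    rw [hfg, preval_neg (K := K) ν hscal g hg] at hlt
    exact @lt_irrefl _ lo.toPreorder _ hlt
  refine ⟨hne, ?_⟩
  have h1 : lo.le (ν f) (ν (f + g)) := by
    have := hval f g hf hg hne
    have hmin : lo.min (ν f) (ν g) = ν f :=
      @min_eq_left _ lo _ _ (@le_of_lt _ lo.toPreorder _ _ hlt)
    rwa [hmin] at this
  have h2 : lo.le (ν (f + g)) (ν f) := by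
    have hng : (-g) ≠ 0 := neg_ne_zero.2 hg
    have hsum : (f + g) + (-g) = f := by abel
    have := hval (f + g) (-g) hne hng (by rw [hsum]; exact hf)
    rw [hsum, preval_neg (K := K) ν hscal g hg] at this
    rcases (@min_le_iff _ lo _ _ _).1 this with h | h
    · exact h
    · exact absurd h (@not_le_of_gt _ lo.toPreorder _ _ hlt)
  exact @le_antisymm _ lo.toPartialOrder _ _ h2 h1

end Helpers

section Helpers2

variable {K V : Type*} [Field K] [AddCommGroup V] [Module K V] {n : ℕ}

private lemma preval_sum (lo : LinearOrder (Fin n → ℤ)) (ν : V → (Fin n → ℤ))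
    (hval : ∀ f g : V, f ≠ 0 → g ≠ 0 → f + g ≠ 0 →
      lo.le (lo.min (ν f) (ν g)) (ν (f + g)))
    (hscal : ∀ (c : K) (f : V), c ≠ 0 → f ≠ 0 → ν (c • f) = ν f)
    (s : Finset V) (hs : s.Nonempty) (h0 : ∀ v ∈ s, v ≠ 0)
    (hinj : Set.InjOn ν s) :
    (∑ v ∈ s, v) ≠ 0 ∧ ∃ v ∈ s, ν (∑ v ∈ s, v) = ν v ∧ ∀ w ∈ s, lo.le (ν v) (ν w) := by
  classical
  induction s using Finset.induction_on with
  | empty => exact absurd hs (by simp)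
  | insert a t ha ih =>
    have haI : a ∈ insert a t := Finset.mem_insert_self a t
    have ha0 : a ≠ 0 := h0 a haI
    rcases t.eq_empty_or_nonempty with rfl | hne_t
    · refine ⟨by simpa using ha0, a, haI, by simp, ?_⟩
      intro w hw
      simp only [Finset.mem_insert, Finset.notMem_empty, or_false] at hw
      rw [hw]
      exact @le_refl _ lo.toPreorder _
    · have hsub : (↑t : Set V) ⊆ ↑(insert a t) := by
        exact_mod_cast Finset.subset_insert a t
      obtain ⟨hsum_ne, v0, hv0t, hval0, hmin0⟩ :=
        ih hne_t (fun v hv => h0 v (Finset.mem_insert_of_mem hv)) (hinj.mono hsub)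
      rw [Finset.sum_insert ha]
      have hνa_ne : ν a ≠ ν (∑ v ∈ t, v) := by
        rw [hval0]
        intro h
        exact ha (hinj (by exact_mod_cast haI)
          (by exact_mod_cast Finset.mem_insert_of_mem hv0t) h ▸ hv0t)
      rcases @lt_or_gt_of_ne _ lo _ _ hνa_ne with hlt | hlt
      · obtain ⟨hne, heq⟩ := preval_min lo ν hval hscal a _ ha0 hsum_ne hlt
        refine ⟨hne, a, haI, heq, ?_⟩
        intro w hw
        rcases Finset.mem_insert.1 hw with rfl | hwt
        · exact @le_refl _ lo.toPreorder _
        · exact @le_trans _ lo.toPreorder _ _ _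
            (@le_of_lt _ lo.toPreorder _ _ (hval0 ▸ hlt)) (hmin0 w hwt)
      · obtain ⟨hne, heq⟩ := preval_min lo ν hval hscal _ a hsum_ne ha0 hlt
        rw [add_comm] at hne heq
        refine ⟨hne, v0, Finset.mem_insert_of_mem hv0t, by rw [heq, hval0], ?_⟩
        intro w hw
        rcases Finset.mem_insert.1 hw with rfl | hwt
        · exact @le_of_lt _ lo.toPreorder _ _ (hval0 ▸ hlt)
        · exact hmin0 w hwt

end Helpers2

section Helpers3

variable {K V : Type*} [Field K] [AddCommGroup V] [Module K V] {n : ℕ}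

private lemma preval_indep (lo : LinearOrder (Fin n → ℤ)) (ν : V → (Fin n → ℤ))
    (hval : ∀ f g : V, f ≠ 0 → g ≠ 0 → f + g ≠ 0 →
      lo.le (lo.min (ν f) (ν g)) (ν (f + g)))
    (hscal : ∀ (c : K) (f : V), c ≠ 0 → f ≠ 0 → ν (c • f) = ν f)
    (T : Set V) (hT0 : ∀ v ∈ T, v ≠ 0) (hinj : Set.InjOn ν T) :
    LinearIndependent K (fun v : T => (v : V)) := by
  classical
  rw [linearIndependent_iff']
  intro s g hsum i hi
  by_contra hgi
  set F : T → V := fun j => g j • (j : V) with hF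
  set s' : Finset T := s.filter (fun j => g j ≠ 0) with hs'
  have hmem : ∀ j ∈ s', g j ≠ 0 := fun j hj => (Finset.mem_filter.1 hj).2
  have hs'ne : s'.Nonempty := ⟨i, Finset.mem_filter.2 ⟨hi, hgi⟩⟩
  have hF0 : ∀ j ∈ s', F j ≠ 0 := fun j hj =>
    smul_ne_zero (hmem j hj) (hT0 j j.2)
  have hFν : ∀ j ∈ s', ν (F j) = ν (j : V) := fun j hj =>
    hscal (g j) (j : V) (hmem j hj) (hT0 j j.2)
  have hFinj : ∀ x ∈ s', ∀ y ∈ s', F x = F y → x = y := by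
    intro x hx y hy h
    have : ν (x : V) = ν (y : V) := by
      rw [← hFν x hx, ← hFν y hy, h]
    exact Subtype.ext (hinj x.2 y.2 this)
  set u : Finset V := s'.image F with hu
  have hsum' : ∑ v ∈ u, v = 0 := by
    rw [hu, Finset.sum_image hFinj]
    rw [hs', Finset.sum_filter_of_ne (by intro x _ hne h0; exact hne (by rw [hF]; simp [h0]))]
    exact hsum
  have hu0 : ∀ v ∈ u, v ≠ 0 := by
    intro v hv
    obtain ⟨j, hj, rfl⟩ := Finset.mem_image.1 hv
    exact hF0 j hj
  have huinj : Set.InjOn ν ↑u := by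
    intro x hx y hy h
    obtain ⟨jx, hjx, rfl⟩ := Finset.mem_image.1 (Finset.mem_coe.1 hx)
    obtain ⟨jy, hjy, rfl⟩ := Finset.mem_image.1 (Finset.mem_coe.1 hy)
    rw [hFν jx hjx, hFν jy hjy] at h
    rw [hFinj jx hjx jy hjy (congrArg F (Subtype.ext (hinj jx.2 jy.2 h)))]
  obtain ⟨hne, -⟩ := preval_sum lo ν hval hscal u (hs'ne.image F) hu0 huinj
  exact hne hsum'

end Helpers3

/-- Let `ν : V∖{0} → ℤ^n` be a prevaluation with one-dimensional
leaves with respect to a total additive order on `ℤ^n`.  For every finite-dimensional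
subspace `W ⊆ V`, the image `ν(W∖{0})` is finite with `#ν(W∖{0}) = dim_K W`. -/
theorem ncard_image_prevaluation_eq_finrank
    (K V : Type*) [Field K] [AddCommGroup V] [Module K V]
    (n : ℕ)
    (lo : LinearOrder (Fin n → ℤ))
    (hadd : ∀ α β δ : Fin n → ℤ, lo.lt α β → lo.lt (α + δ) (β + δ))
    (ν : V → (Fin n → ℤ))
    (hval : ∀ f g : V, f ≠ 0 → g ≠ 0 → f + g ≠ 0 →
      lo.le (lo.min (ν f) (ν g)) (ν (f + g)))
    (hscal : ∀ (c : K) (f : V), c ≠ 0 → f ≠ 0 → ν (c • f) = ν f)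
    (hleaf : ∀ f g : V, f ≠ 0 → g ≠ 0 → ν f = ν g →
      ∃ c : K, c ≠ 0 ∧ (f = c • g ∨ lo.lt (ν f) (ν (f - c • g))))
    (W : Submodule K V) [FiniteDimensional K W] :
    (ν '' {v : V | v ∈ W ∧ v ≠ 0}).Finite ∧
    (ν '' {v : V | v ∈ W ∧ v ≠ 0}).ncard = Module.finrank K W := by
  classical
  have hcard : ∀ t : Finset V, (↑t : Set V) ⊆ {v : V | v ∈ W ∧ v ≠ 0} →
      Set.InjOn ν ↑t → t.card ≤ Module.finrank K W := by
    intro t ht hinjt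
    have hind : LinearIndependent K ((↑) : (↑t : Set V) → V) :=
      preval_indep lo ν hval hscal _ (fun v hv => (ht hv).2) hinjt
    have h1 := finrank_span_finset_eq_card hind
    have h2 : Submodule.span K (↑t : Set V) ≤ W :=
      Submodule.span_le.2 (fun v hv => (ht hv).1)
    rw [← h1]
    exact Submodule.finrank_mono h2
  have hrep : ∀ γ ∈ ν '' {v : V | v ∈ W ∧ v ≠ 0}, ∃ v, (v ∈ W ∧ v ≠ 0) ∧ ν v = γ := by
    rintro γ ⟨v, hv, rfl⟩; exact ⟨v, hv, rfl⟩
  choose! rep hrepB hrepν using hrep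
  have himg : ∀ (t : Finset (Fin n → ℤ)), (↑t : Set (Fin n → ℤ)) ⊆ ν '' {v : V | v ∈ W ∧ v ≠ 0} →
      ((↑(t.image rep) : Set V) ⊆ {v : V | v ∈ W ∧ v ≠ 0}) ∧ Set.InjOn ν ↑(t.image rep) ∧
      (t.image rep).card = t.card := by
    intro t hts
    have hrepinj : ∀ x ∈ t, ∀ y ∈ t, rep x = rep y → x = y := by
      intro x hx y hy h
      rw [← hrepν x (hts hx), ← hrepν y (hts hy), h]
    refine ⟨?_, ?_, Finset.card_image_of_injOn (fun x hx y hy => hrepinj x hx y hy)⟩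
    · intro v hv
      obtain ⟨γ, hγ, rfl⟩ := Finset.mem_image.1 (Finset.mem_coe.1 hv)
      exact hrepB γ (hts hγ)
    · intro x hx y hy h
      obtain ⟨γx, hγx, rfl⟩ := Finset.mem_image.1 (Finset.mem_coe.1 hx)
      obtain ⟨γy, hγy, rfl⟩ := Finset.mem_image.1 (Finset.mem_coe.1 hy)
      rw [hrepν γx (hts hγx), hrepν γy (hts hγy)] at h
      rw [h]
  have hfin : (ν '' {v : V | v ∈ W ∧ v ≠ 0}).Finite := by
    by_contra hinf
    have hinf' : (ν '' {v : V | v ∈ W ∧ v ≠ 0}).Infinite := hinf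
    obtain ⟨t, hts, htc⟩ := hinf'.exists_subset_card_eq (Module.finrank K W + 1)
    obtain ⟨h1, h2, h3⟩ := himg t hts
    have := hcard (t.image rep) h1 h2
    omega
  refine ⟨hfin, ?_⟩
  have htsub : (↑hfin.toFinset : Set (Fin n → ℤ)) ⊆ ν '' {v : V | v ∈ W ∧ v ≠ 0} := by
    rw [Set.Finite.coe_toFinset]
  obtain ⟨husub, huinj, hucard⟩ := himg hfin.toFinset htsub
  set u : Finset V := hfin.toFinset.image rep with hu
  have hspan : ∀ v ∈ W, v ∈ Submodule.span K (↑u : Set V) := by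
    by_contra hbad
    push_neg at hbad
    set B : Set V := {v : V | v ∈ W ∧ v ≠ 0 ∧ v ∉ Submodule.span K (↑u : Set V)} with hB
    have hBne : B.Nonempty := by
      obtain ⟨v, hvW, hv⟩ := hbad
      exact ⟨v, hvW, fun h0 => hv (h0 ▸ Submodule.zero_mem _), hv⟩
    have hBfin : (ν '' B).Finite :=
      hfin.subset (by rintro _ ⟨v, hv, rfl⟩; exact ⟨v, ⟨hv.1, hv.2.1⟩, rfl⟩)
    obtain ⟨γ, hγB, hγmax⟩ :=
      @Set.exists_max_image (Fin n → ℤ) (Fin n → ℤ) lo (ν '' B) id hBfin (hBne.image ν)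
    obtain ⟨f, hfB, hfγ⟩ := hγB
    have hfS : ν f ∈ ν '' {v : V | v ∈ W ∧ v ≠ 0} := ⟨f, ⟨hfB.1, hfB.2.1⟩, rfl⟩
    have hgprop := hrepB (ν f) hfS
    have hgν : ν (rep (ν f)) = ν f := hrepν (ν f) hfS
    have hgspan : rep (ν f) ∈ Submodule.span K (↑u : Set V) :=
      Submodule.subset_span (Finset.mem_coe.2
        (Finset.mem_image.2 ⟨ν f, hfin.mem_toFinset.2 hfS, rfl⟩))
    obtain ⟨c, hc, hcase⟩ := hleaf f (rep (ν f)) hfB.2.1 hgprop.2 hgν.symm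
    have hfcg : f ≠ c • rep (ν f) := by
      intro h
      exact hfB.2.2 (h ▸ Submodule.smul_mem _ c hgspan)
    rcases hcase with h | h
    · exact hfcg h
    · have hf'0 : f - c • rep (ν f) ≠ 0 := sub_ne_zero.2 hfcg
      have hf'B : f - c • rep (ν f) ∈ B := by
        refine ⟨Submodule.sub_mem _ hfB.1 (Submodule.smul_mem _ c hgprop.1), hf'0, ?_⟩
        intro hmem
        refine hfB.2.2 ?_
        have heq : f = (f - c • rep (ν f)) + c • rep (ν f) := by abel
        rw [heq]
        exact Submodule.add_mem _ hmem (Submodule.smul_mem _ c hgspan)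
      have hle := hγmax (ν (f - c • rep (ν f))) ⟨_, hf'B, rfl⟩
      simp only [id] at hle
      rw [← hfγ] at hle
      exact @not_le_of_gt _ lo.toPreorder _ _ h hle
  have hind : LinearIndependent K ((↑) : (↑u : Set V) → V) :=
    preval_indep lo ν hval hscal _ (fun v hv => (husub hv).2) huinj
  have hspan' : Submodule.span K (↑u : Set V) = W :=
    le_antisymm (Submodule.span_le.2 (fun v hv => (husub hv).1)) hspan
  have h1 := finrank_span_finset_eq_card hind
  rw [hspan'] at h1
  rw [h1, hucard, Set.ncard_eq_toFinset_card _ hfin]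
end

section
/- Let A ⊂ ℝ^n be a finite set whose convex hull has nonempty interior, and define u : ℝ^n → ℝ by u(x) := log( Σ_{α ∈ A} exp(⟨α, x⟩) ), where ⟨·,·⟩ is the standard inner product. Then u is smooth and convex, and the image of its gradient map ∇u : ℝ^n → ℝ^n is exactly the interior of the convex hull of A. -/
open Set

noncomputable section

/-- The log-sum-exp potential `u(x) = log Σ_{α ∈ A} exp⟪α, x⟫` associated to a finite
set `A ⊂ ℝ^n` of exponents. -/
def logSumExpPotential {n : ℕ} (A : Finset (EuclideanSpace ℝ (Fin n))) :
    EuclideanSpace ℝ (Fin n) → ℝ :=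
  fun x => Real.log (∑ α ∈ A, Real.exp (inner ℝ α x : ℝ))

section Aux

variable {n : ℕ}

lemma sumExp_pos (A : Finset (EuclideanSpace ℝ (Fin n))) (hA : A.Nonempty)
    (x : EuclideanSpace ℝ (Fin n)) : 0 < ∑ α ∈ A, Real.exp (inner ℝ α x : ℝ) :=
  Finset.sum_pos (fun _ _ => Real.exp_pos _) hA

lemma contDiff_sumExp (A : Finset (EuclideanSpace ℝ (Fin n))) :
    ContDiff ℝ (⊤ : ℕ∞) (fun x : EuclideanSpace ℝ (Fin n) => ∑ α ∈ A, Real.exp (inner ℝ α x : ℝ)) :=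
  ContDiff.sum fun α _ => Real.contDiff_exp.comp (innerSL ℝ α).contDiff

lemma contDiff_logSumExp (A : Finset (EuclideanSpace ℝ (Fin n))) (hA : A.Nonempty) :
    ContDiff ℝ (⊤ : ℕ∞) (logSumExpPotential A) := by
  rw [contDiff_iff_contDiffAt]
  intro x
  exact (Real.contDiffAt_log.mpr (sumExp_pos A hA x).ne').comp x (contDiff_sumExp A).contDiffAt

lemma hasGradientAt_logSumExp (A : Finset (EuclideanSpace ℝ (Fin n))) (hA : A.Nonempty)
    (x : EuclideanSpace ℝ (Fin n)) :
    HasGradientAt (logSumExpPotential A)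
      ((∑ α ∈ A, Real.exp (inner ℝ α x : ℝ))⁻¹ • ∑ α ∈ A, Real.exp (inner ℝ α x : ℝ) • α) x := by
  have hS : HasFDerivAt (fun y : EuclideanSpace ℝ (Fin n) => ∑ α ∈ A, Real.exp (inner ℝ α y : ℝ))
      (∑ α ∈ A, Real.exp (inner ℝ α x : ℝ) • innerSL ℝ α) x :=
    HasFDerivAt.fun_sum fun α _ =>
      (Real.hasDerivAt_exp _).comp_hasFDerivAt x (innerSL ℝ α).hasFDerivAt
  have h := (Real.hasDerivAt_log (sumExp_pos A hA x).ne').comp_hasFDerivAt x hS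
  rw [hasGradientAt_iff_hasFDerivAt]
  convert h using 1
  · rfl
  · rfl
  ext y
  simp [InnerProductSpace.toDual_apply_apply, inner_smul_left, sum_inner, real_inner_smul_left,
    Finset.mul_sum]

lemma convexOn_logSumExp (A : Finset (EuclideanSpace ℝ (Fin n))) (hA : A.Nonempty) :
    ConvexOn ℝ Set.univ (logSumExpPotential A) := by
  refine ⟨convex_univ, fun x _ y _ a b ha hb hab => ?_⟩
  rcases ha.eq_or_lt with rfl | ha'
  · simp at hab; simp [hab]
  rcases hb.eq_or_lt with rfl | hb'
  · simp at hab; simp [hab]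
  have ha1 : a < 1 := by linarith
  have hb1 : b < 1 := by linarith
  have hpq : Real.HolderConjugate (1/a) (1/b) := Real.holderConjugate_one_div ha' hb' hab
  have key : ∑ α ∈ A, Real.exp (inner ℝ α (a • x + b • y) : ℝ)
      ≤ (∑ α ∈ A, Real.exp (inner ℝ α x : ℝ)) ^ a * (∑ α ∈ A, Real.exp (inner ℝ α y : ℝ)) ^ b := by
    have H := Real.inner_le_Lp_mul_Lq_of_nonneg (s := A) hpq
      (f := fun α => Real.exp (inner ℝ α x : ℝ) ^ a) (g := fun α => Real.exp (inner ℝ α y : ℝ) ^ b)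
      (fun i _ => Real.rpow_nonneg (Real.exp_pos _).le _)
      (fun i _ => Real.rpow_nonneg (Real.exp_pos _).le _)
    have e1 : ∀ α : EuclideanSpace ℝ (Fin n),
        Real.exp (inner ℝ α (a • x + b • y) : ℝ)
          = Real.exp (inner ℝ α x : ℝ) ^ a * Real.exp (inner ℝ α y : ℝ) ^ b := by
      intro α
      rw [inner_add_right, real_inner_smul_right, real_inner_smul_right, Real.exp_add,
        ← Real.exp_mul, ← Real.exp_mul, mul_comm a, mul_comm b]
    have e2 : ∀ (z : EuclideanSpace ℝ (Fin n)) (c : ℝ), c ≠ 0 → ∀ α : EuclideanSpace ℝ (Fin n),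
        (Real.exp (inner ℝ α z : ℝ) ^ c) ^ (1/c) = Real.exp (inner ℝ α z : ℝ) := by
      intro z c hc α
      rw [← Real.rpow_mul (Real.exp_pos _).le, mul_one_div, div_self hc, Real.rpow_one]
    calc ∑ α ∈ A, Real.exp (inner ℝ α (a • x + b • y) : ℝ)
        = ∑ α ∈ A, Real.exp (inner ℝ α x : ℝ) ^ a * Real.exp (inner ℝ α y : ℝ) ^ b :=
          Finset.sum_congr rfl fun α _ => e1 α
      _ ≤ (∑ α ∈ A, (Real.exp (inner ℝ α x : ℝ) ^ a) ^ (1/a)) ^ (1/(1/a))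
            * (∑ α ∈ A, (Real.exp (inner ℝ α y : ℝ) ^ b) ^ (1/b)) ^ (1/(1/b)) := by
          simpa [one_div_one_div] using H
      _ = (∑ α ∈ A, Real.exp (inner ℝ α x : ℝ)) ^ a * (∑ α ∈ A, Real.exp (inner ℝ α y : ℝ)) ^ b := by
          simp only [e2 x a ha'.ne', e2 y b hb'.ne', one_div_one_div]
  calc logSumExpPotential A (a • x + b • y)
      ≤ Real.log ((∑ α ∈ A, Real.exp (inner ℝ α x : ℝ)) ^ a
          * (∑ α ∈ A, Real.exp (inner ℝ α y : ℝ)) ^ b) :=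
        Real.log_le_log (sumExp_pos A hA _) key
    _ = a * logSumExpPotential A x + b * logSumExpPotential A y := by
        rw [Real.log_mul (by positivity) (by positivity), Real.log_rpow (sumExp_pos A hA x),
          Real.log_rpow (sumExp_pos A hA y)]
        rfl

lemma centerMass_mem_interior (A : Finset (EuclideanSpace ℝ (Fin n))) (hA : A.Nonempty)
    (hint : (interior (convexHull ℝ (A : Set (EuclideanSpace ℝ (Fin n))))).Nonempty)
    (w : EuclideanSpace ℝ (Fin n) → ℝ) (hw : ∀ α ∈ A, 0 < w α) (hw1 : ∑ α ∈ A, w α = 1) :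
    A.centerMass w id ∈ interior (convexHull ℝ (A : Set (EuclideanSpace ℝ (Fin n)))) := by
  obtain ⟨z, hz⟩ := hint
  have hzhull : z ∈ convexHull ℝ (A : Set (EuclideanSpace ℝ (Fin n))) := interior_subset hz
  rw [Finset.convexHull_eq] at hzhull
  obtain ⟨v, hv0, hv1, hvz⟩ := hzhull
  have hinf : 0 < A.inf' hA w := (Finset.lt_inf'_iff hA).mpr (fun α hα => hw α hα)
  set t : ℝ := (A.inf' hA w) / 2 with ht
  have htpos : 0 < t := by positivity
  have hvle1 : ∀ α ∈ A, v α ≤ 1 := fun α hα =>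
    hv1 ▸ Finset.single_le_sum (fun i hi => hv0 i hi) hα
  have htw : ∀ α ∈ A, t * v α ≤ w α := by
    intro α hα
    have h1 : t ≤ w α := le_trans (by linarith) (Finset.inf'_le w hα)
    nlinarith [hv0 α hα, hvle1 α hα]
  have ht1 : t < 1 := by
    obtain ⟨α, hα⟩ := id hA
    have h2 : A.inf' hA w ≤ w α := Finset.inf'_le w hα
    have h3 : w α ≤ 1 := hw1 ▸ Finset.single_le_sum (fun i hi => (hw i hi).le) hα
    have : A.inf' hA w ≤ 1 := le_trans h2 h3
    linarith
  have h1t : (1:ℝ) - t ≠ 0 := by linarith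
  set u : EuclideanSpace ℝ (Fin n) → ℝ := fun α => (w α - t * v α) / (1 - t) with hu
  have hu0 : ∀ α ∈ A, 0 ≤ u α := fun α hα =>
    div_nonneg (by linarith [htw α hα]) (by linarith)
  have hu1 : ∑ α ∈ A, u α = 1 := by
    rw [hu]
    rw [← Finset.sum_div, Finset.sum_sub_distrib, ← Finset.mul_sum, hv1, hw1, mul_one,
      div_self h1t]
  have hq : A.centerMass u id ∈ convexHull ℝ (A : Set (EuclideanSpace ℝ (Fin n))) :=
    Finset.centerMass_id_mem_convexHull A hu0 (hu1 ▸ one_pos)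
  have hseg := Finset.centerMass_segment A v u id hv1 hu1 t (1 - t) (by ring)
  have hwt : (fun α => t * v α + (1 - t) * u α) = w := by
    funext α
    rw [hu]
    field_simp
    ring
  rw [hwt, hvz] at hseg
  rw [← hseg]
  exact (convex_convexHull ℝ _).combo_interior_self_mem_interior hz hq htpos
    (by linarith) (by ring)

lemma le_logSumExp (A : Finset (EuclideanSpace ℝ (Fin n))) {α : EuclideanSpace ℝ (Fin n)}
    (hα : α ∈ A) (x : EuclideanSpace ℝ (Fin n)) :
    (inner ℝ α x : ℝ) ≤ logSumExpPotential A x := by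
  have h1 : Real.exp (inner ℝ α x : ℝ) ≤ ∑ β ∈ A, Real.exp (inner ℝ β x : ℝ) :=
    Finset.single_le_sum (f := fun β => Real.exp (inner ℝ β x : ℝ))
      (fun β _ => (Real.exp_pos _).le) hα
  calc (inner ℝ α x : ℝ) = Real.log (Real.exp (inner ℝ α x : ℝ)) := (Real.log_exp _).symm
    _ ≤ logSumExpPotential A x := Real.log_le_log (Real.exp_pos _) h1

lemma inner_le_sup' (A : Finset (EuclideanSpace ℝ (Fin n))) (hA : A.Nonempty)
    (x : EuclideanSpace ℝ (Fin n)) {a : EuclideanSpace ℝ (Fin n)}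
    (ha : a ∈ convexHull ℝ (A : Set (EuclideanSpace ℝ (Fin n)))) :
    (inner ℝ a x : ℝ) ≤ A.sup' hA (fun α => (inner ℝ α x : ℝ)) := by
  set M := A.sup' hA (fun α => (inner ℝ α x : ℝ))
  have hconv : Convex ℝ {a : EuclideanSpace ℝ (Fin n) | (inner ℝ a x : ℝ) ≤ M} :=
    convex_halfSpace_le
      ⟨fun a b => inner_add_left a b x, fun c a => real_inner_smul_left a x c⟩ M
  have hsub : convexHull ℝ (A : Set (EuclideanSpace ℝ (Fin n)))
      ⊆ {a | (inner ℝ a x : ℝ) ≤ M} :=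
    convexHull_min
      (fun α hα => Finset.le_sup' (fun α => (inner ℝ α x : ℝ)) (Finset.mem_coe.mp hα)) hconv
  exact hsub ha

lemma exists_hasGradientAt_eq (A : Finset (EuclideanSpace ℝ (Fin n))) (hA : A.Nonempty)
    {y : EuclideanSpace ℝ (Fin n)}
    (hy : y ∈ interior (convexHull ℝ (A : Set (EuclideanSpace ℝ (Fin n))))) :
    ∃ x, HasGradientAt (logSumExpPotential A) y x := by
  obtain ⟨ε, hε, hball⟩ := Metric.isOpen_iff.mp isOpen_interior y hy
  have hball' : Metric.ball y ε ⊆ convexHull ℝ (A : Set (EuclideanSpace ℝ (Fin n))) :=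
    hball.trans interior_subset
  set f : EuclideanSpace ℝ (Fin n) → ℝ :=
    fun x => logSumExpPotential A x - (inner ℝ y x : ℝ) with hf
  have hbound : ∀ x, ε/2 * ‖x‖ ≤ f x := by
    intro x
    rcases eq_or_ne x 0 with rfl | hx0
    · obtain ⟨α, hα⟩ := hA
      have := le_logSumExp A hα 0
      simp only [hf, norm_zero, mul_zero, inner_zero_right] at this ⊢
      linarith
    · have hxn : (0:ℝ) < ‖x‖ := norm_pos_iff.mpr hx0
      set x' := y + ((ε/2) * ‖x‖⁻¹) • x with hx'
      have hx'ball : x' ∈ Metric.ball y ε := by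
        rw [Metric.mem_ball, dist_eq_norm, hx', add_sub_cancel_left, norm_smul,
          Real.norm_eq_abs, abs_of_pos (by positivity)]
        rw [mul_assoc, inv_mul_cancel₀ hxn.ne', mul_one]
        linarith
      have h1 : (inner ℝ x' x : ℝ) ≤ A.sup' hA (fun α => (inner ℝ α x : ℝ)) :=
        inner_le_sup' A hA x (hball' hx'ball)
      obtain ⟨α₀, hα₀, hsup⟩ := Finset.exists_mem_eq_sup' hA (fun α => (inner ℝ α x : ℝ))
      have h2 : (inner ℝ α₀ x : ℝ) ≤ logSumExpPotential A x := le_logSumExp A hα₀ x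
      have h3 : (inner ℝ x' x : ℝ) = (inner ℝ y x : ℝ) + ε/2 * ‖x‖ := by
        rw [hx', inner_add_left, real_inner_smul_left, real_inner_self_eq_norm_mul_norm]
        field_simp
      rw [hsup] at h1
      simp only [hf]
      linarith
  have hcont : Continuous f := by
    refine Continuous.sub ((contDiff_logSumExp A hA).continuous) ?_
    exact (innerSL ℝ y).continuous
  have hcoer : Filter.Tendsto f (Filter.cocompact _) Filter.atTop := by
    refine Filter.tendsto_atTop_mono hbound ?_
    exact (tendsto_norm_cocompact_atTop).const_mul_atTop (by positivity)
  obtain ⟨x₀, hx₀⟩ := hcont.exists_forall_le hcoer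
  have hu := hasGradientAt_logSumExp A hA x₀
  set p := (∑ α ∈ A, Real.exp (inner ℝ α x₀ : ℝ))⁻¹ • ∑ α ∈ A, Real.exp (inner ℝ α x₀ : ℝ) • α
  have hfd : HasFDerivAt f
      (InnerProductSpace.toDual ℝ (EuclideanSpace ℝ (Fin n)) p - innerSL ℝ y) x₀ :=
    HasFDerivAt.sub (hasGradientAt_iff_hasFDerivAt.mp hu) (innerSL ℝ y).hasFDerivAt
  have hmin : IsLocalMin f x₀ := Filter.Eventually.of_forall hx₀
  have h0 : fderiv ℝ f x₀ = 0 := hmin.fderiv_eq_zero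
  rw [hfd.fderiv] at h0
  have hpy : p = y := by
    have h1 : InnerProductSpace.toDual ℝ (EuclideanSpace ℝ (Fin n)) p = innerSL ℝ y :=
      sub_eq_zero.mp h0
    have h2 : innerSL ℝ y = InnerProductSpace.toDual ℝ (EuclideanSpace ℝ (Fin n)) y := by
      ext z; simp [InnerProductSpace.toDual_apply_apply]
    rw [h2] at h1
    exact (InnerProductSpace.toDual ℝ (EuclideanSpace ℝ (Fin n))).injective h1
  exact ⟨x₀, hpy ▸ hu⟩

end Aux

/-- Let `A ⊂ ℝ^n` be a finite set whose convex hull has nonempty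
interior and let `u(x) = log Σ_{α ∈ A} exp⟪α, x⟫`.  Then `u` is smooth and convex, and
the image of its gradient map `∇u : ℝ^n → ℝ^n` is exactly the interior of the convex
hull of `A`. -/
theorem range_gradient_logSumExp_eq_interior_convexHull (n : ℕ)
    (A : Finset (EuclideanSpace ℝ (Fin n)))
    (hA : (interior (convexHull ℝ (A : Set (EuclideanSpace ℝ (Fin n))))).Nonempty) :
    ContDiff ℝ (⊤ : ℕ∞) (logSumExpPotential A) ∧
    ConvexOn ℝ Set.univ (logSumExpPotential A) ∧
    Set.range (gradient (logSumExpPotential A)) =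
      interior (convexHull ℝ (A : Set (EuclideanSpace ℝ (Fin n)))) := by
  have hAne : A.Nonempty := by
    by_contra h
    rw [Finset.not_nonempty_iff_eq_empty] at h
    subst h
    simp at hA
  refine ⟨contDiff_logSumExp A hAne, convexOn_logSumExp A hAne, ?_⟩
  apply Set.Subset.antisymm
  · rintro _ ⟨x, rfl⟩
    have hgrad := (hasGradientAt_logSumExp A hAne x).gradient
    rw [hgrad]
    set S := ∑ α ∈ A, Real.exp (inner ℝ α x : ℝ) with hS
    have hSpos : 0 < S := sumExp_pos A hAne x
    have hw : ∀ α ∈ A, 0 < Real.exp (inner ℝ α x : ℝ) / S := fun α _ => by positivity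
    have hw1 : ∑ α ∈ A, Real.exp (inner ℝ α x : ℝ) / S = 1 := by
      rw [← Finset.sum_div, div_self hSpos.ne']
    have hcm : A.centerMass (fun α => Real.exp (inner ℝ α x : ℝ) / S) id
        = S⁻¹ • ∑ α ∈ A, Real.exp (inner ℝ α x : ℝ) • α := by
      rw [Finset.centerMass, hw1, inv_one, one_smul, Finset.smul_sum]
      refine Finset.sum_congr rfl fun α _ => ?_
      rw [smul_smul, div_eq_inv_mul]
      rfl
    rw [← hcm]
    exact centerMass_mem_interior A hAne hA _ hw hw1
  · intro y hy
    obtain ⟨x, hx⟩ := exists_hasGradientAt_eq A hAne hy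
    exact ⟨x, hx.gradient⟩
end
end
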